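/- arXiv:1908.04487 — 2 statements merged into one kernel-verified Lean document; each statement's English description precedes it below -/
import Mathlib

section
/- Let f_b be nonnegative boundary data with finite mass and entropy, and for each integer k > 2 let F^k be a nonnegative L¹([0,1]²)⁴ solution of the truncated Broadwell system at level k. Then there is a constant c_b, depending only on f_b, such that for all k > 2 the outgoing boundary fluxes satisfy ∫_{{y: F^k_1(1,y)>k}} F^k_1(1,y) dy + ∫_{{y: F^k_2(0,y)>k}} F^k_2(0,y) dy + ∫_{{x: F^k_3(x,1)>k}} F^k_3(x,1) dx + ∫_{{x: F^k_4(x,0)>k}} F^k_4(x,0) dx ≤ c_b / ln k. -/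
open MeasureTheory Real Set Filter
open scoped Classical Topology ENNReal

noncomputable section

/-- The closed unit square `[0,1] × [0,1]`. -/
def UnitSq : Set (ℝ × ℝ) := Icc (0:ℝ) 1 ×ˢ Icc (0:ℝ) 1

/-- The truncation `a ↦ a / (1 + a/k)`. -/
def truncK (k a : ℝ) : ℝ := a / (1 + a / k)

/-- Nonnegative measurable boundary data on `[0,1]` with finite mass. -/
def IsBoundaryData (fb : Fin 4 → ℝ → ℝ) : Prop :=
  ∀ i, Measurable (fb i) ∧ (∀ u ∈ Icc (0:ℝ) 1, 0 ≤ fb i u) ∧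
    IntegrableOn (fb i) (Icc (0:ℝ) 1)

/-- Finite entropy of the boundary data. -/
def FiniteEntropy (fb : Fin 4 → ℝ → ℝ) : Prop :=
  ∀ i, IntegrableOn (fun u => fb i u * Real.log (1 + fb i u)) (Icc (0:ℝ) 1)

/-- The truncated collision term `Q^k`; indices `0,1,2,3` stand for `F₁,F₂,F₃,F₄`. -/
def Qk (k : ℝ) (F : Fin 4 → ℝ → ℝ → ℝ) (x y : ℝ) : ℝ :=
  truncK k (F 2 x y) * truncK k (F 3 x y) - truncK k (F 0 x y) * truncK k (F 1 x y)

/-- Nonnegative `L¹` mild solution of the truncated Broadwell system at level `k`. -/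
def MildTrunc (k : ℝ) (fb : Fin 4 → ℝ → ℝ) (F : Fin 4 → ℝ → ℝ → ℝ) : Prop :=
  (∀ i, Measurable (Function.uncurry (F i))) ∧
  (∀ i, ∀ᵐ p : ℝ × ℝ ∂(volume.restrict UnitSq), 0 ≤ F i p.1 p.2) ∧
  (∀ i, IntegrableOn (fun p : ℝ × ℝ => F i p.1 p.2) UnitSq) ∧
  (∀ᵐ p : ℝ × ℝ ∂(volume.restrict UnitSq),
    F 0 p.1 p.2 = min (fb 0 p.2) (k / 2) + ∫ X in (0:ℝ)..p.1, Qk k F X p.2) ∧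
  (∀ᵐ p : ℝ × ℝ ∂(volume.restrict UnitSq),
    F 1 p.1 p.2 = min (fb 1 p.2) (k / 2) + ∫ X in p.1..(1:ℝ), Qk k F X p.2) ∧
  (∀ᵐ p : ℝ × ℝ ∂(volume.restrict UnitSq),
    F 2 p.1 p.2 = min (fb 2 p.1) (k / 2) - ∫ Y in (0:ℝ)..p.2, Qk k F p.1 Y) ∧
  (∀ᵐ p : ℝ × ℝ ∂(volume.restrict UnitSq),
    F 3 p.1 p.2 = min (fb 3 p.1) (k / 2) - ∫ Y in p.2..(1:ℝ), Qk k F p.1 Y)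

/-- Outgoing trace of `F₁` at `x = 1`, read off from the mild form. -/
def trace1 (k : ℝ) (fb : Fin 4 → ℝ → ℝ) (F : Fin 4 → ℝ → ℝ → ℝ) (y : ℝ) : ℝ :=
  min (fb 0 y) (k / 2) + ∫ X in (0:ℝ)..(1:ℝ), Qk k F X y

/-- Outgoing trace of `F₂` at `x = 0`, read off from the mild form. -/
def trace2 (k : ℝ) (fb : Fin 4 → ℝ → ℝ) (F : Fin 4 → ℝ → ℝ → ℝ) (y : ℝ) : ℝ :=
  min (fb 1 y) (k / 2) + ∫ X in (0:ℝ)..(1:ℝ), Qk k F X y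

/-- Outgoing trace of `F₃` at `y = 1`, read off from the mild form. -/
def trace3 (k : ℝ) (fb : Fin 4 → ℝ → ℝ) (F : Fin 4 → ℝ → ℝ → ℝ) (x : ℝ) : ℝ :=
  min (fb 2 x) (k / 2) - ∫ Y in (0:ℝ)..(1:ℝ), Qk k F x Y

/-- Outgoing trace of `F₄` at `y = 0`, read off from the mild form. -/
def trace4 (k : ℝ) (fb : Fin 4 → ℝ → ℝ) (F : Fin 4 → ℝ → ℝ → ℝ) (x : ℝ) : ℝ :=
  min (fb 3 x) (k / 2) - ∫ Y in (0:ℝ)..(1:ℝ), Qk k F x Y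

/-- A smooth nonnegative mollifier with integral one, supported in the closed ball of radius `α`. -/
def IsMollifier (α : ℝ) (μ : ℝ × ℝ → ℝ) : Prop :=
  ContDiff ℝ (⊤ : ℕ∞) μ ∧ (∀ w, 0 ≤ μ w) ∧
    Function.support μ ⊆ Metric.closedBall 0 α ∧ (∫ w : ℝ × ℝ, μ w) = 1

/-- Extension of a function on `[0,1]²` by zero to all of `ℝ²`. -/
def extSq (f : ℝ → ℝ → ℝ) : ℝ × ℝ → ℝ := fun p => if p ∈ UnitSq then f p.1 p.2 else 0

/-- Convolution with a mollifier, after extension by zero outside `[0,1]²`. -/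
def molConv (f : ℝ → ℝ → ℝ) (μ : ℝ × ℝ → ℝ) (x y : ℝ) : ℝ :=
  ∫ w : ℝ × ℝ, extSq f ((x, y) - w) * μ w

/-- Right-hand side of the damped mollified equation for `F₁`. -/
def rhs1 (k : ℝ) (μ : ℝ × ℝ → ℝ) (f F : Fin 4 → ℝ → ℝ → ℝ) (x y : ℝ) : ℝ :=
  truncK k (F 2 x y) * truncK k (molConv (f 3) μ x y)
    - truncK k (F 0 x y) * truncK k (molConv (f 1) μ x y)

/-- Right-hand side of the damped mollified equation for `F₂`. -/
def rhs2 (k : ℝ) (μ : ℝ × ℝ → ℝ) (f F : Fin 4 → ℝ → ℝ → ℝ) (x y : ℝ) : ℝ :=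
  truncK k (molConv (f 2) μ x y) * truncK k (F 3 x y)
    - truncK k (molConv (f 0) μ x y) * truncK k (F 1 x y)

/-- Right-hand side of the damped mollified equation for `F₃`. -/
def rhs3 (k : ℝ) (μ : ℝ × ℝ → ℝ) (f F : Fin 4 → ℝ → ℝ → ℝ) (x y : ℝ) : ℝ :=
  truncK k (F 0 x y) * truncK k (molConv (f 1) μ x y)
    - truncK k (F 2 x y) * truncK k (molConv (f 3) μ x y)

/-- Right-hand side of the damped mollified equation for `F₄`. -/
def rhs4 (k : ℝ) (μ : ℝ × ℝ → ℝ) (f F : Fin 4 → ℝ → ℝ → ℝ) (x y : ℝ) : ℝ :=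
  truncK k (molConv (f 0) μ x y) * truncK k (F 1 x y)
    - truncK k (molConv (f 2) μ x y) * truncK k (F 3 x y)

/-- The constant `c_α = α⁻¹ ∫₀¹ Σᵢ f_{bi}`. -/
def cAlpha (α : ℝ) (fb : Fin 4 → ℝ → ℝ) : ℝ :=
  (1 / α) * ∫ u in Icc (0:ℝ) 1, ∑ i, fb i u

/-- Membership in the convex set `K_α`. -/
def MemK (α : ℝ) (fb : Fin 4 → ℝ → ℝ) (f : Fin 4 → ℝ → ℝ → ℝ) : Prop :=
  (∀ i, Measurable (Function.uncurry (f i))) ∧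
  (∀ i, ∀ᵐ p : ℝ × ℝ ∂(volume.restrict UnitSq), 0 ≤ f i p.1 p.2) ∧
  (∀ i, IntegrableOn (fun p : ℝ × ℝ => f i p.1 p.2) UnitSq) ∧
  (∑ i, ∫ p in UnitSq, f i p.1 p.2) ≤ cAlpha α fb

/-- Nonnegative `L¹` mild solution of the damped mollified system with data `f`. -/
def DampedMild (k α : ℝ) (fb : Fin 4 → ℝ → ℝ) (μ : ℝ × ℝ → ℝ)
    (f F : Fin 4 → ℝ → ℝ → ℝ) : Prop :=
  (∀ i, Measurable (Function.uncurry (F i))) ∧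
  (∀ i, ∀ᵐ p : ℝ × ℝ ∂(volume.restrict UnitSq), 0 ≤ F i p.1 p.2) ∧
  (∀ i, IntegrableOn (fun p : ℝ × ℝ => F i p.1 p.2) UnitSq) ∧
  (∀ᵐ p : ℝ × ℝ ∂(volume.restrict UnitSq),
    F 0 p.1 p.2 = min (fb 0 p.2) (k / 2)
      + ∫ X in (0:ℝ)..p.1, (rhs1 k μ f F X p.2 - α * F 0 X p.2)) ∧
  (∀ᵐ p : ℝ × ℝ ∂(volume.restrict UnitSq),
    F 1 p.1 p.2 = min (fb 1 p.2) (k / 2)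
      + ∫ X in p.1..(1:ℝ), (rhs2 k μ f F X p.2 - α * F 1 X p.2)) ∧
  (∀ᵐ p : ℝ × ℝ ∂(volume.restrict UnitSq),
    F 2 p.1 p.2 = min (fb 2 p.1) (k / 2)
      + ∫ Y in (0:ℝ)..p.2, (rhs3 k μ f F p.1 Y - α * F 2 p.1 Y)) ∧
  (∀ᵐ p : ℝ × ℝ ∂(volume.restrict UnitSq),
    F 3 p.1 p.2 = min (fb 3 p.1) (k / 2)
      + ∫ Y in p.2..(1:ℝ), (rhs4 k μ f F p.1 Y - α * F 3 p.1 Y))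

/-- The entropy-dissipation integrand `(a - b) log (a/b)`, interpreted as a nonnegative
extended-real number (it is `∞` when exactly one of `a`, `b` vanishes, `0` when both do). -/
def entDiss (a b : ℝ) : ℝ≥0∞ :=
  if a = 0 ∧ b = 0 then 0
  else if a = 0 ∨ b = 0 then ⊤
  else ENNReal.ofReal ((a - b) * Real.log (a / b))

/-- Relative compactness (sequential form) of a sequence of functions in `L¹(μ)`. -/
def RelCompL1 {X : Type*} [MeasurableSpace X] (μ : Measure X) (f : ℕ → X → ℝ) : Prop :=
  ∀ φ : ℕ → ℕ, StrictMono φ → ∃ ψ : ℕ → ℕ, StrictMono ψ ∧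
    ∃ g : X → ℝ, Integrable g μ ∧
      Tendsto (fun n => ∫ x, |f (φ (ψ n)) x - g x| ∂μ) atTop (𝓝 0)

open intervalIntegral

/-- Entropy integrand used in the proof. -/
def entg (k s : ℝ) : ℝ := Real.log (truncK k (max s 0) + (k⁻¹)^2)

/-- Its primitive. -/
def Phi (k t : ℝ) : ℝ := ∫ s in (0:ℝ)..t, entg k s

-- === from aux1.lean ===
section TruncK

variable {k a b : ℝ}

lemma truncK_nonneg (hk : 0 < k) (ha : 0 ≤ a) : 0 ≤ truncK k a := by
  have : 0 < 1 + a / k := by positivity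
  exact div_nonneg ha this.le

lemma truncK_le_self (hk : 0 < k) (ha : 0 ≤ a) : truncK k a ≤ a := by
  have h1 : (1:ℝ) ≤ 1 + a / k := by
    have : 0 ≤ a / k := by positivity
    linarith
  calc truncK k a ≤ a / 1 := by
        apply div_le_div_of_nonneg_left ha ?_ h1 |>.trans_eq rfl
        norm_num
    _ = a := by norm_num

lemma truncK_le_k (hk : 0 < k) (ha : 0 ≤ a) : truncK k a ≤ k := by
  have hd : 0 < 1 + a / k := by positivity
  rw [truncK, div_le_iff₀ hd]
  have : k * (a / k) = a := by field_simp
  nlinarith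

lemma truncK_mono (hk : 0 < k) (ha : 0 ≤ a) (hab : a ≤ b) :
    truncK k a ≤ truncK k b := by
  have hda : 0 < 1 + a / k := by positivity
  have hdb : 0 < 1 + b / k := by
    have hb : 0 ≤ b := ha.trans hab
    positivity
  rw [truncK, truncK, div_le_div_iff₀ hda hdb]
  have h1 : a * (b / k) = b * (a / k) := by ring
  nlinarith

lemma half_le_truncK (hk : 0 < k) (ha : 0 ≤ a) (hak : a ≤ k) : a / 2 ≤ truncK k a := by
  have hd : 0 < 1 + a / k := by positivity
  have hd2 : 1 + a / k ≤ 2 := by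
    have : a / k ≤ 1 := (div_le_one hk).mpr hak
    linarith
  rw [truncK, div_le_div_iff₀ (by norm_num) hd]
  nlinarith

lemma truncK_k_self (hk : 0 < k) : truncK k k = k / 2 := by
  rw [truncK, div_self hk.ne']
  norm_num

lemma half_k_le_truncK (hk : 0 < k) (hak : k ≤ a) : k / 2 ≤ truncK k a := by
  have := truncK_mono hk hk.le hak
  rw [truncK_k_self hk] at this
  exact this

lemma continuous_truncK_max (hk : 0 < k) :
    Continuous (fun s : ℝ => truncK k (max s 0)) := by
  have hden : ∀ s : ℝ, (1 + max s 0 / k) ≠ 0 := by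
    intro s
    have : 0 ≤ max s 0 / k := by positivity
    positivity
  exact (continuous_id.max continuous_const).div
    (continuous_const.add ((continuous_id.max continuous_const).div_const k)) hden

lemma measurable_truncK : Measurable (truncK k) :=
  measurable_id.div ((measurable_const.add (measurable_id.div_const k)))

end TruncK

-- === from aux2.lean ===

section Entg
variable {k s t : ℝ}

lemma eps_pos (hk : 0 < k) : 0 < (k⁻¹)^2 := by positivity

lemma trunc_max_nonneg (hk : 0 < k) (s : ℝ) : 0 ≤ truncK k (max s 0) :=
  truncK_nonneg hk (le_max_right _ _)

lemma entg_arg_pos (hk : 0 < k) (s : ℝ) : 0 < truncK k (max s 0) + (k⁻¹)^2 :=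
  add_pos_of_nonneg_of_pos (trunc_max_nonneg hk s) (eps_pos hk)

lemma entg_continuous (hk : 0 < k) : Continuous (entg k) := by
  apply Continuous.log
  · exact (continuous_truncK_max hk).add continuous_const
  · intro s; exact (entg_arg_pos hk s).ne'

lemma entg_mono (hk : 0 < k) : Monotone (entg k) := by
  intro a b hab
  apply Real.log_le_log (entg_arg_pos hk a)
  have := truncK_mono hk (le_max_right a 0) (max_le_max hab le_rfl)
  linarith

lemma entg_le_log_one_add (hk : 3 ≤ k) (hs : 0 ≤ s) : entg k s ≤ Real.log (1 + s) := by
  have hk0 : (0:ℝ) < k := by linarith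
  apply Real.log_le_log (entg_arg_pos hk0 s)
  have h1 : truncK k (max s 0) ≤ s := by
    rw [max_eq_left hs]; exact truncK_le_self hk0 hs
  have h2 : (k⁻¹)^2 ≤ 1 := by
    have : k⁻¹ ≤ 1 := by
      rw [inv_le_one_iff₀]; right; linarith
    have h0 : 0 ≤ k⁻¹ := by positivity
    nlinarith
  linarith

lemma entg_le_log_k_add (hk : 3 ≤ k) (s : ℝ) : entg k s ≤ Real.log (k + 1) := by
  have hk0 : (0:ℝ) < k := by linarith
  apply Real.log_le_log (entg_arg_pos hk0 s)
  have h1 : truncK k (max s 0) ≤ k := truncK_le_k hk0 (le_max_right _ _)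
  have h2 : (k⁻¹)^2 ≤ 1 := by
    have : k⁻¹ ≤ 1 := by rw [inv_le_one_iff₀]; right; linarith
    have h0 : 0 ≤ k⁻¹ := by positivity
    nlinarith
  linarith

lemma entg_ge_log_eps (hk : 0 < k) (s : ℝ) : Real.log ((k⁻¹)^2) ≤ entg k s :=
  Real.log_le_log (eps_pos hk) (le_add_of_nonneg_left (trunc_max_nonneg hk s))

lemma abs_entg_le (hk : 3 ≤ k) (s : ℝ) : |entg k s| ≤ 2 * Real.log k := by
  have hk0 : (0:ℝ) < k := by linarith
  rw [abs_le]
  constructor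
  · have h1 := entg_ge_log_eps hk0 s
    have h2 : Real.log ((k⁻¹)^2) = -(2 * Real.log k) := by
      rw [Real.log_pow, Real.log_inv]; ring
    linarith
  · have h1 := entg_le_log_k_add hk s
    have h2 : Real.log (k + 1) ≤ Real.log (k^2) :=
      Real.log_le_log (by linarith) (by nlinarith)
    have h3 : Real.log (k^2) = 2 * Real.log k := by
      rw [Real.log_pow]; norm_num
    linarith

lemma entg_ge_log_half (hk : 0 < k) (hs : 0 < s) (hsk : s ≤ k) :
    Real.log (s / 2) ≤ entg k s := by
  apply Real.log_le_log (by positivity)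
  have h1 : s / 2 ≤ truncK k (max s 0) := by
    rw [max_eq_left hs.le]; exact half_le_truncK hk hs.le hsk
  have := (eps_pos hk).le
  linarith

lemma entg_nonneg_of_two_le (hk : 3 ≤ k) (hs : 2 ≤ s) : 0 ≤ entg k s := by
  have hk0 : (0:ℝ) < k := by linarith
  have h1 : entg k 2 ≤ entg k s := entg_mono hk0 hs
  have h2 : Real.log (2/2) ≤ entg k 2 := entg_ge_log_half hk0 (by norm_num) (by linarith)
  norm_num at h2
  linarith

end Entg

-- === from aux3.lean ===
-- general monotone integral bounds
lemma integral_le_mul_right {g : ℝ → ℝ} (hg : Monotone g) (hgc : Continuous g) (a b : ℝ) :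
    ∫ s in a..b, g s ≤ (b - a) * g b := by
  rcases le_total a b with h | h
  · have h1 : ∫ s in a..b, g s ≤ ∫ s in a..b, g b := by
      apply intervalIntegral.integral_mono_on h (hgc.intervalIntegrable _ _)
        intervalIntegrable_const
      intro x hx; exact hg hx.2
    simpa [intervalIntegral.integral_const, smul_eq_mul] using h1
  · rw [intervalIntegral.integral_symm]
    have h1 : ∫ s in b..a, g b ≤ ∫ s in b..a, g s := by
      apply intervalIntegral.integral_mono_on h intervalIntegrable_const
        (hgc.intervalIntegrable _ _)
      intro x hx; exact hg hx.1
    rw [intervalIntegral.integral_const, smul_eq_mul] at h1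
    nlinarith [h1]

lemma mul_le_integral_left {g : ℝ → ℝ} (hg : Monotone g) (hgc : Continuous g) (a b : ℝ) :
    (b - a) * g a ≤ ∫ s in a..b, g s := by
  rcases le_total a b with h | h
  · have h1 : ∫ s in a..b, g a ≤ ∫ s in a..b, g s := by
      apply intervalIntegral.integral_mono_on h intervalIntegrable_const
        (hgc.intervalIntegrable _ _)
      intro x hx; exact hg hx.1
    simpa [intervalIntegral.integral_const, smul_eq_mul] using h1
  · rw [intervalIntegral.integral_symm]
    have h1 : ∫ s in b..a, g s ≤ ∫ s in b..a, g a := by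
      apply intervalIntegral.integral_mono_on h (hgc.intervalIntegrable _ _)
        intervalIntegrable_const
      intro x hx; exact hg hx.2
    rw [intervalIntegral.integral_const, smul_eq_mul] at h1
    nlinarith [h1]

-- helper: 2 - 2/sqrt x ≤ log x
lemma two_sub_le_log {x : ℝ} (hx : 0 < x) : 2 - 2 / Real.sqrt x ≤ Real.log x := by
  have hs : 0 < Real.sqrt x := Real.sqrt_pos.mpr hx
  have h1 : Real.log (Real.sqrt x)⁻¹ ≤ (Real.sqrt x)⁻¹ - 1 :=
    Real.log_le_sub_one_of_pos (by positivity)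
  rw [Real.log_inv, Real.log_sqrt hx.le] at h1
  have h2 : (Real.sqrt x)⁻¹ = 1 / Real.sqrt x := by rw [one_div]
  rw [h2] at h1
  have h3 : 2 / Real.sqrt x = 2 * (1 / Real.sqrt x) := by ring
  rw [h3]
  linarith

-- === from aux4.lean ===
section Phi
variable {k t : ℝ}

lemma Phi_sub (hk : 0 < k) (a b : ℝ) : Phi k b - Phi k a = ∫ s in a..b, entg k s := by
  have h := intervalIntegral.integral_add_adjacent_intervals (μ := volume)
    ((entg_continuous hk).intervalIntegrable 0 a) ((entg_continuous hk).intervalIntegrable a b)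
  rw [Phi, Phi, ← h]; ring

lemma Phi_continuous (hk : 0 < k) : Continuous (Phi k) :=
  intervalIntegral.continuous_primitive
    (fun a b => (entg_continuous hk).intervalIntegrable a b) 0

lemma Phi_le (hk : 3 ≤ k) (ht : 0 ≤ t) : Phi k t ≤ t * Real.log (1 + t) := by
  have hk0 : (0:ℝ) < k := by linarith
  have h1 : Phi k t ≤ (t - 0) * entg k t :=
    integral_le_mul_right (entg_mono hk0) (entg_continuous hk0) 0 t
  have h2 : entg k t ≤ Real.log (1 + t) := entg_le_log_one_add hk ht
  calc Phi k t ≤ (t - 0) * entg k t := h1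
    _ ≤ t * Real.log (1 + t) := by
        rw [sub_zero]
        apply mul_le_mul_of_nonneg_left h2 ht

-- lower bound for t in [0,2]
lemma Phi_lb_small (hk : 3 ≤ k) (ht : 0 ≤ t) (ht2 : t ≤ 2) : -4 ≤ Phi k t := by
  have hk0 : (0:ℝ) < k := by linarith
  -- minorant m s = 2 - 2*sqrt 2 * s^(-1/2)
  set m : ℝ → ℝ := fun s => 2 - 2 * Real.sqrt 2 * s ^ (-(1/2) : ℝ) with hm
  have hmint : IntervalIntegrable m volume 0 t := by
    apply IntervalIntegrable.sub intervalIntegrable_const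
    exact (intervalIntegrable_rpow' (by norm_num)).const_mul _
  have hint2 : IntervalIntegrable (entg k) volume 0 t := (entg_continuous hk0).intervalIntegrable 0 t
  have hae : ∀ᵐ s ∂(volume.restrict (Icc (0:ℝ) t)), m s ≤ entg k s := by
    have h0 : ∀ᵐ (s:ℝ) ∂(volume.restrict (Icc (0:ℝ) t)), s ≠ 0 := by
      rw [ae_iff]
      have hset : {s : ℝ | ¬ s ≠ 0} = {(0:ℝ)} := by ext s; simp
      rw [hset, Measure.restrict_apply (measurableSet_singleton 0)]
      exact measure_mono_null inter_subset_left (measure_singleton 0)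
    filter_upwards [h0, ae_restrict_mem measurableSet_Icc] with s hs0 hsI
    have hs : 0 < s := lt_of_le_of_ne hsI.1 (Ne.symm hs0)
    have hsk : s ≤ k := by have := hsI.2; linarith
    have h1 : Real.log (s / 2) ≤ entg k s := entg_ge_log_half hk0 hs hsk
    have h2 : 2 - 2 / Real.sqrt (s/2) ≤ Real.log (s / 2) := two_sub_le_log (by positivity)
    have h3 : 2 / Real.sqrt (s/2) = 2 * Real.sqrt 2 * s ^ (-(1/2) : ℝ) := by
      have hss : Real.sqrt s ≠ 0 := (Real.sqrt_pos.mpr hs).ne'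
      have h2s : Real.sqrt 2 ≠ 0 := by positivity
      rw [show s/2 = s * 2⁻¹ by ring, Real.sqrt_mul hs.le, Real.sqrt_inv,
        Real.rpow_neg hs.le, ← Real.sqrt_eq_rpow]
      rw [div_eq_iff (by positivity)]
      field_simp
    rw [hm]
    simp only
    rw [← h3]
    linarith
  have hmono : ∫ s in (0:ℝ)..t, m s ≤ Phi k t :=
    intervalIntegral.integral_mono_ae_restrict ht hmint hint2 hae
  have hcalc : ∫ s in (0:ℝ)..t, m s = 2 * t - 4 * Real.sqrt 2 * Real.sqrt t := by
    rw [hm]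
    rw [intervalIntegral.integral_sub intervalIntegrable_const
      ((intervalIntegrable_rpow' (by norm_num)).const_mul _)]
    rw [intervalIntegral.integral_const, intervalIntegral.integral_const_mul,
      integral_rpow (Or.inl (by norm_num))]
    rw [Real.zero_rpow (by norm_num)]
    rw [show (-(1/2) : ℝ) + 1 = 1/2 by norm_num, ← Real.sqrt_eq_rpow]
    simp [smul_eq_mul]
    ring
  have hfin : 0 ≤ 2 * t - 4 * Real.sqrt 2 * Real.sqrt t + 4 := by
    have h1 : Real.sqrt t ^ 2 = t := Real.sq_sqrt ht
    have h2 : Real.sqrt 2 ^ 2 = 2 := Real.sq_sqrt (by norm_num)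
    nlinarith [sq_nonneg (Real.sqrt t - Real.sqrt 2)]
  linarith [hmono, hcalc.symm.le]

lemma Phi_lb (hk : 3 ≤ k) (ht : 0 ≤ t) : -4 ≤ Phi k t := by
  have hk0 : (0:ℝ) < k := by linarith
  rcases le_total t 2 with h | h
  · exact Phi_lb_small hk ht h
  · have h1 : Phi k t - Phi k 2 = ∫ s in (2:ℝ)..t, entg k s := Phi_sub hk0 2 t
    have h2 : (t - 2) * entg k 2 ≤ ∫ s in (2:ℝ)..t, entg k s :=
      mul_le_integral_left (entg_mono hk0) (entg_continuous hk0) 2 t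
    have h3 : 0 ≤ entg k 2 := entg_nonneg_of_two_le hk le_rfl
    have h4 := Phi_lb_small hk (by norm_num) (le_refl 2)
    nlinarith

lemma Phi_above_k (hk : 3 ≤ k) (hkt : k ≤ t) :
    Phi k k + (t - k) * Real.log (k / 2) ≤ Phi k t := by
  have hk0 : (0:ℝ) < k := by linarith
  have h1 : Phi k t - Phi k k = ∫ s in k..t, entg k s := Phi_sub hk0 k t
  have h2 : (t - k) * entg k k ≤ ∫ s in k..t, entg k s :=
    mul_le_integral_left (entg_mono hk0) (entg_continuous hk0) k t
  have h3 : Real.log (k / 2) ≤ entg k k := entg_ge_log_half hk0 hk0 le_rfl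
  nlinarith [sub_nonneg.mpr hkt]

lemma Phi_k_big (hk : 32 ≤ k) : k / 8 * Real.log k ≤ Phi k k := by
  have hk3 : (3:ℝ) ≤ k := by linarith
  have hk0 : (0:ℝ) < k := by linarith
  set r := Real.sqrt k with hr
  have hr0 : 0 < r := Real.sqrt_pos.mpr hk0
  have hrk : r ≤ k / 4 := by
    have h := Real.sqrt_le_sqrt (show k ≤ (k/4)^2 by nlinarith)
    rwa [Real.sqrt_sq (by linarith : (0:ℝ) ≤ k/4)] at h
  have h1 : Phi k k - Phi k r = ∫ s in r..k, entg k s := Phi_sub hk0 r k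
  have h2 : (k - r) * entg k r ≤ ∫ s in r..k, entg k s :=
    mul_le_integral_left (entg_mono hk0) (entg_continuous hk0) r k
  have h3 : Real.log (r / 2) ≤ entg k r :=
    entg_ge_log_half hk0 hr0 (by nlinarith)
  have h4 : Real.log (r / 2) = Real.log k / 2 - Real.log 2 := by
    rw [Real.log_div hr0.ne' (by norm_num), hr, Real.log_sqrt hk0.le]
  have hlogk : 3 ≤ Real.log k := by
    have h32 : Real.log 32 ≤ Real.log k := Real.log_le_log (by norm_num) hk
    have h5 : Real.log 32 = 5 * Real.log 2 := by
      rw [show (32:ℝ) = 2^5 by norm_num, Real.log_pow]; norm_num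
    have := Real.log_two_gt_d9
    linarith
  have hlog2 : Real.log 2 ≤ Real.log k / 4 := by
    have h16 : Real.log 16 ≤ Real.log k := Real.log_le_log (by norm_num) (by linarith)
    have h5 : Real.log 16 = 4 * Real.log 2 := by
      rw [show (16:ℝ) = 2^4 by norm_num, Real.log_pow]; norm_num
    linarith
  have h5 : Real.log k / 4 ≤ entg k r := by linarith
  have h6 : Phi k r ≥ -4 := Phi_lb hk3 hr0.le
  have h7 : (k - r) * (Real.log k / 4) ≤ (k - r) * entg k r := by
    apply mul_le_mul_of_nonneg_left h5
    nlinarith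
  have h8 : (3/4 * k) * (Real.log k / 4) ≤ (k - r) * (Real.log k / 4) := by
    apply mul_le_mul_of_nonneg_right _ (by linarith)
    linarith
  -- Phi k k ≥ -4 + 3/16 k log k ≥ 1/8 k log k
  nlinarith

lemma Phi_k_nonneg (hk : 32 ≤ k) : 0 ≤ Phi k k := by
  have := Phi_k_big hk
  have hlogk : 0 ≤ Real.log k := Real.log_nonneg (by linarith)
  nlinarith

end Phi

-- === from chain.lean ===
lemma chain_primitive {g q u : ℝ → ℝ} (hg : Monotone g) (hgc : Continuous g)
    (hq : IntervalIntegrable q volume 0 1) (c : ℝ)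
    (hu : ∀ x, u x = c + ∫ t in (0:ℝ)..x, q t) :
    (∫ s in (0:ℝ)..(u 1), g s) - (∫ s in (0:ℝ)..(u 0), g s)
      = ∫ x in (0:ℝ)..1, g (u x) * q x := by
  -- basic facts
  have hIcc : uIcc (0:ℝ) 1 = Icc (0:ℝ) 1 := uIcc_of_le zero_le_one
  have hqsub : ∀ a b : ℝ, a ∈ Icc (0:ℝ) 1 → b ∈ Icc (0:ℝ) 1 →
      IntervalIntegrable q volume a b := by
    intro a b ha hb
    exact hq.mono_set (by rw [hIcc]; exact uIcc_subset_Icc ha hb)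
  have hqI : IntegrableOn q (Icc (0:ℝ) 1) volume :=
    (intervalIntegrable_iff_integrableOn_Icc_of_le zero_le_one).mp hq
  have hucont : ContinuousOn u (Icc (0:ℝ) 1) := by
    have h1 : ContinuousOn (fun x => c + ∫ t in (0:ℝ)..x, q t) (Icc (0:ℝ) 1) := by
      rw [← hIcc]
      exact continuousOn_const.add
        (intervalIntegral.continuousOn_primitive_interval (by rwa [hIcc]))
    exact h1.congr (fun x _ => hu x)
  have hgucont : ContinuousOn (fun x => g (u x)) (Icc (0:ℝ) 1) :=
    hgc.comp_continuousOn hucont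
  -- bound for g ∘ u
  obtain ⟨Mg, hMg⟩ := isCompact_Icc.exists_bound_of_continuousOn hgucont
  -- integrability of the RHS integrand
  have hGQmeas : AEStronglyMeasurable (fun x => g (u x) * q x)
      (volume.restrict (Icc (0:ℝ) 1)) :=
    (hgucont.aestronglyMeasurable measurableSet_Icc).mul hqI.aestronglyMeasurable
  have hGQI : IntegrableOn (fun x => g (u x) * q x) (Icc (0:ℝ) 1) volume := by
    apply Integrable.mono' (hqI.abs.const_mul Mg) hGQmeas
    filter_upwards [ae_restrict_mem measurableSet_Icc] with x hx
    rw [Real.norm_eq_abs, abs_mul]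
    exact mul_le_mul_of_nonneg_right ((Real.norm_eq_abs _ ▸ hMg x hx)) (abs_nonneg _)
  have hGQint : IntervalIntegrable (fun x => g (u x) * q x) volume 0 1 := by
    rw [intervalIntegrable_iff_integrableOn_Icc_of_le zero_le_one]; exact hGQI
  have hGQsub : ∀ a b : ℝ, a ∈ Icc (0:ℝ) 1 → b ∈ Icc (0:ℝ) 1 →
      IntervalIntegrable (fun x => g (u x) * q x) volume a b := by
    intro a b ha hb
    exact hGQint.mono_set (by rw [hIcc]; exact uIcc_subset_Icc ha hb)
  -- uniform continuity of g ∘ u on [0,1]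
  have hUC : UniformContinuousOn (fun x => g (u x)) (Icc (0:ℝ) 1) :=
    isCompact_Icc.uniformContinuousOn_of_continuous hgucont
  -- the quantity to estimate
  set D : ℝ := ((∫ s in (0:ℝ)..u 1, g s) - ∫ s in (0:ℝ)..u 0, g s) -
    ∫ x in (0:ℝ)..1, g (u x) * q x with hD
  set C : ℝ := 1 + ∫ x in (0:ℝ)..1, |q x| with hC
  have hCpos : 0 < C := by
    have : 0 ≤ ∫ x in (0:ℝ)..1, |q x| :=
      intervalIntegral.integral_nonneg zero_le_one (fun x _ => abs_nonneg _)
    rw [hC]; linarith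
  -- main estimate
  have hmain : ∀ ε : ℝ, 0 < ε → |D| ≤ ε * C := by
    intro ε hε
    obtain ⟨δ, hδ, hδε⟩ := (Metric.uniformContinuousOn_iff_le).mp hUC ε hε
    set n : ℕ := ⌈δ⁻¹⌉₊ + 1 with hn
    have hn0 : 0 < (n:ℝ) := by positivity
    have hstep : (1:ℝ)/n ≤ δ := by
      have h2 : δ⁻¹ ≤ (n:ℝ) := by
        refine (Nat.le_ceil _).trans ?_
        rw [hn]; push_cast; linarith
      rw [div_le_iff₀ hn0]
      calc (1:ℝ) = δ * δ⁻¹ := by field_simp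
        _ ≤ δ * n := by nlinarith
    -- partition
    set a : ℕ → ℝ := fun j => j / n with ha
    have ha0 : a 0 = 0 := by simp [ha]
    have han : a n = 1 := by rw [ha]; field_simp
    have haj : ∀ j : ℕ, j ≤ n → a j ∈ Icc (0:ℝ) 1 := by
      intro j hj
      constructor
      · apply div_nonneg (by positivity) hn0.le
      · rw [div_le_one hn0]; exact_mod_cast hj
    have hadj : ∀ j : ℕ, a (j+1) - a j = 1/n := by
      intro j; rw [ha]; push_cast; field_simp; ring
    have hale : ∀ j : ℕ, a j ≤ a (j+1) := by
      intro j; have := hadj j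
      have : (0:ℝ) < 1/n := by positivity
      linarith [hadj j]
    -- u increments
    have hudiff : ∀ j : ℕ, j < n → u (a (j+1)) - u (a j) =
        ∫ t in (a j)..(a (j+1)), q t := by
      intro j hj
      have h1 : u (a (j+1)) - u (a j) =
          (∫ t in (0:ℝ)..(a (j+1)), q t) - ∫ t in (0:ℝ)..(a j), q t := by
        rw [hu, hu]; ring
      rw [h1, intervalIntegral.integral_interval_sub_left
        (hqsub 0 (a (j+1)) (by norm_num) (haj (j+1) hj))
        (hqsub 0 (a j) (by norm_num) (haj j hj.le))]
    -- telescoping identity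
    have hgint : ∀ α β : ℝ, IntervalIntegrable g volume α β :=
      fun α β => hgc.intervalIntegrable α β
    have hΦdiff : ∀ j, j < n → (∫ s in (0:ℝ)..u (a (j+1)), g s) - (∫ s in (0:ℝ)..u (a j), g s)
        = ∫ s in (u (a j))..(u (a (j+1))), g s := by
      intro j hj
      rw [← intervalIntegral.integral_add_adjacent_intervals (hgint 0 (u (a j)))
        (hgint (u (a j)) (u (a (j+1))))]
      ring
    have htel : ((∫ s in (0:ℝ)..u 1, g s) - ∫ s in (0:ℝ)..u 0, g s)
        = ∑ j ∈ Finset.range n, ((∫ s in (0:ℝ)..u (a (j+1)), g s)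
            - (∫ s in (0:ℝ)..u (a j), g s)) := by
      rw [Finset.sum_range_sub (fun j => ∫ s in (0:ℝ)..u (a j), g s)]
      rw [ha0, han]
    have hRHSsum : (∫ x in (0:ℝ)..1, g (u x) * q x)
        = ∑ j ∈ Finset.range n, ∫ x in (a j)..(a (j+1)), g (u x) * q x := by
      rw [intervalIntegral.sum_integral_adjacent_intervals
        (fun j hj => hGQsub (a j) (a (j+1)) (haj j hj.le) (haj (j+1) hj)), ha0, han]
    have hABSsum : (∫ x in (0:ℝ)..1, |q x|)
        = ∑ j ∈ Finset.range n, ∫ x in (a j)..(a (j+1)), |q x| := by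
      rw [intervalIntegral.sum_integral_adjacent_intervals
        (fun j hj => (hqsub (a j) (a (j+1)) (haj j hj.le) (haj (j+1) hj)).abs), ha0, han]
    -- per-piece estimate
    have hpieceIcc : ∀ j, j < n → Icc (a j) (a (j+1)) ⊆ Icc (0:ℝ) 1 := by
      intro j hj
      apply Icc_subset_Icc (haj j hj.le).1 (haj (j+1) hj).2
    have hpiece : ∀ j, j < n →
        |((∫ s in (u (a j))..(u (a (j+1))), g s)
            - ∫ x in (a j)..(a (j+1)), g (u x) * q x)|
          ≤ ε * ∫ x in (a j)..(a (j+1)), |q x| := by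
      intro j hj
      have hmemj := haj j hj.le
      have hmemj1 := haj (j+1) hj
      have hqj : IntervalIntegrable q volume (a j) (a (j+1)) := hqsub _ _ hmemj hmemj1
      have hGQj : IntervalIntegrable (fun x => g (u x) * q x) volume (a j) (a (j+1)) :=
        hGQsub _ _ hmemj hmemj1
      have hw : u (a (j+1)) - u (a j) = ∫ t in (a j)..(a (j+1)), q t := hudiff j hj
      have hsubint : ∀ v : ℝ, (∀ x ∈ Icc (a j) (a (j+1)), |g (u x) - v| ≤ ε) →
          |v * (∫ t in (a j)..(a (j+1)), q t) - ∫ x in (a j)..(a (j+1)), g (u x) * q x|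
            ≤ ε * ∫ x in (a j)..(a (j+1)), |q x| := by
        intro v hv
        have h1 : v * (∫ t in (a j)..(a (j+1)), q t) = ∫ x in (a j)..(a (j+1)), v * q x :=
          (intervalIntegral.integral_const_mul v q).symm
        rw [h1, ← intervalIntegral.integral_sub (hqj.const_mul v) hGQj]
        refine (intervalIntegral.abs_integral_le_integral_abs (hale j)).trans ?_
        have h3 : ∫ x in (a j)..(a (j+1)), |v * q x - g (u x) * q x|
            ≤ ∫ x in (a j)..(a (j+1)), ε * |q x| := by
          apply intervalIntegral.integral_mono_on (hale j)
            ((hqj.const_mul v).sub hGQj).abs (hqj.abs.const_mul ε)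
          intro x hx
          have h4 : v * q x - g (u x) * q x = (v - g (u x)) * q x := by ring
          rw [h4, abs_mul]
          apply mul_le_mul_of_nonneg_right _ (abs_nonneg _)
          rw [abs_sub_comm]
          exact hv x hx
        refine h3.trans ?_
        rw [intervalIntegral.integral_const_mul]
      have hclose : ∀ z ∈ Icc (a j) (a (j+1)), ∀ x ∈ Icc (a j) (a (j+1)),
          |g (u x) - g (u z)| ≤ ε := by
        intro z hz x hx
        have hxI := hpieceIcc j hj hx
        have hzI := hpieceIcc j hj hz
        have hd : dist x z ≤ δ := by
          rw [Real.dist_eq, abs_le]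
          have := hadj j
          constructor <;> [skip; skip] <;>
            (try constructor) <;> nlinarith [hx.1, hx.2, hz.1, hz.2, hstep]
        have := hδε x hxI z hzI hd
        rwa [Real.dist_eq] at this
      have hU := hsubint (g (u (a (j+1))))
        (hclose (a (j+1)) (right_mem_Icc.mpr (hale j)))
      have hL := hsubint (g (u (a j))) (hclose (a j) (left_mem_Icc.mpr (hale j)))
      have hIU : (∫ s in (u (a j))..(u (a (j+1))), g s)
          ≤ g (u (a (j+1))) * (∫ t in (a j)..(a (j+1)), q t) := by
        have h5 := integral_le_mul_right hg hgc (u (a j)) (u (a (j+1)))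
        rw [hw] at h5
        linarith [h5, mul_comm (∫ t in (a j)..(a (j+1)), q t) (g (u (a (j+1))))]
      have hIL : g (u (a j)) * (∫ t in (a j)..(a (j+1)), q t)
          ≤ ∫ s in (u (a j))..(u (a (j+1))), g s := by
        have h5 := mul_le_integral_left hg hgc (u (a j)) (u (a (j+1)))
        rw [hw] at h5
        linarith [h5, mul_comm (∫ t in (a j)..(a (j+1)), q t) (g (u (a j)))]
      have hU' := abs_le.mp hU
      have hL' := abs_le.mp hL
      rw [abs_le]
      constructor <;> [linarith [hL'.1]; linarith [hU'.2]]
    -- sum up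
    have hsum : D = ∑ j ∈ Finset.range n,
        ((∫ s in (u (a j))..(u (a (j+1))), g s)
          - ∫ x in (a j)..(a (j+1)), g (u x) * q x) := by
      rw [hD, htel, hRHSsum, ← Finset.sum_sub_distrib]
      apply Finset.sum_congr rfl
      intro j hj
      rw [hΦdiff j (Finset.mem_range.mp hj)]
    have habs : |D| ≤ ∑ j ∈ Finset.range n,
        (ε * ∫ x in (a j)..(a (j+1)), |q x|) := by
      rw [hsum]
      refine (Finset.abs_sum_le_sum_abs _ _).trans ?_
      apply Finset.sum_le_sum
      intro j hj
      exact hpiece j (Finset.mem_range.mp hj)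
    rw [← Finset.mul_sum, ← hABSsum] at habs
    refine habs.trans ?_
    rw [hC]
    have h9 : (0:ℝ) ≤ ∫ x in (0:ℝ)..1, |q x| :=
      intervalIntegral.integral_nonneg zero_le_one (fun x _ => abs_nonneg _)
    nlinarith
  -- conclude D = 0
  have hD0 : D = 0 := by
    by_contra hne
    have h1 : 0 < |D| := abs_pos.mpr hne
    have := hmain (|D| / (2 * C)) (by positivity)
    have h2 : |D| / (2 * C) * C = |D| / 2 := by field_simp
    rw [h2] at this
    linarith
  linarith [hD0, abs_nonneg D]

-- === from nonneg.lean ===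
lemma nonneg_of_ae_nonneg_contOn {u : ℝ → ℝ} (hu : ContinuousOn u (Icc 0 1))
    (h : ∀ᵐ x ∂(volume.restrict (Icc (0:ℝ) 1)), 0 ≤ u x) {x₀ : ℝ}
    (hx₀ : x₀ ∈ Icc (0:ℝ) 1) : 0 ≤ u x₀ := by
  by_contra h0
  push_neg at h0
  have hc : ContinuousWithinAt u (Icc 0 1) x₀ := hu x₀ hx₀
  have hev : u ⁻¹' (Iio 0) ∈ 𝓝[Icc (0:ℝ) 1] x₀ := hc (Iio_mem_nhds h0)
  obtain ⟨ε, hε, hsub⟩ := Metric.mem_nhdsWithin_iff.mp hev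
  set δ : ℝ := min ε 1 / 2 with hδdef
  have hδ : 0 < δ := by
    rw [hδdef]; positivity
  have hδε : δ < ε := by
    rw [hδdef]
    rcases le_total ε 1 with h' | h' <;> simp [min_eq_left, min_eq_right, h'] <;> linarith
  have hδhalf : δ ≤ 1/2 := by
    rw [hδdef]
    have : min ε 1 ≤ 1 := min_le_right _ _
    linarith
  obtain ⟨lo, hi, hlohi, hlen, hJIcc, hJball⟩ :
      ∃ lo hi : ℝ, lo ≤ hi ∧ hi - lo = δ ∧ Icc lo hi ⊆ Icc (0:ℝ) 1 ∧
        Icc lo hi ⊆ Metric.ball x₀ ε := by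
    rcases le_or_gt (x₀ + δ) 1 with hcase | hcase
    · refine ⟨x₀, x₀ + δ, by linarith, by ring, ?_, ?_⟩
      · apply Icc_subset_Icc hx₀.1 hcase
      · intro x hx
        rw [Metric.mem_ball, Real.dist_eq, abs_lt]
        constructor <;> [linarith [hx.1]; linarith [hx.2]]
    · refine ⟨x₀ - δ, x₀, by linarith, by ring, ?_, ?_⟩
      · apply Icc_subset_Icc _ hx₀.2
        have := hx₀.2
        linarith
      · intro x hx
        rw [Metric.mem_ball, Real.dist_eq, abs_lt]
        constructor <;> [linarith [hx.1]; linarith [hx.2]]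
  have hmeas0 : (volume.restrict (Icc (0:ℝ) 1)) {x | u x < 0} = 0 := by
    have h1 := ae_iff.mp h
    simpa [not_le] using h1
  have hsubset : Icc lo hi ⊆ {x | u x < 0} := by
    intro x hx
    exact hsub ⟨hJball hx, hJIcc hx⟩
  have h1 : (volume.restrict (Icc (0:ℝ) 1)) (Icc lo hi) = 0 :=
    measure_mono_null hsubset hmeas0
  have h2 : (volume.restrict (Icc (0:ℝ) 1)) (Icc lo hi) = ENNReal.ofReal δ := by
    rw [Measure.restrict_apply' measurableSet_Icc, inter_eq_left.mpr hJIcc,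
      Real.volume_Icc, hlen]
  rw [h2] at h1
  have := ENNReal.ofReal_pos.mpr hδ
  rw [h1] at this
  exact lt_irrefl _ this

-- === from diss.lean ===
lemma dissipation_pointwise {k a b c d : ℝ} (hk : 3 ≤ k)
    (ha : 0 ≤ a) (hb : 0 ≤ b) (hc : 0 ≤ c) (hd : 0 ≤ d) :
    (entg k a + entg k b - entg k c - entg k d) *
      (truncK k c * truncK k d - truncK k a * truncK k b) ≤ 16 := by
  have hk0 : (0:ℝ) < k := by linarith
  have hε : 0 < (k⁻¹)^2 := eps_pos hk0
  set ε : ℝ := (k⁻¹)^2 with hεdef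
  set fa := truncK k a with hfa
  set fb := truncK k b with hfb
  set fc := truncK k c with hfc
  set fd := truncK k d with hfd
  have hfa0 : 0 ≤ fa := truncK_nonneg hk0 ha
  have hfb0 : 0 ≤ fb := truncK_nonneg hk0 hb
  have hfc0 : 0 ≤ fc := truncK_nonneg hk0 hc
  have hfd0 : 0 ≤ fd := truncK_nonneg hk0 hd
  have hfak : fa ≤ k := truncK_le_k hk0 ha
  have hfbk : fb ≤ k := truncK_le_k hk0 hb
  have hfck : fc ≤ k := truncK_le_k hk0 hc
  have hfdk : fd ≤ k := truncK_le_k hk0 hd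
  have hea : entg k a = Real.log (fa + ε) := by rw [entg, max_eq_left ha]
  have heb : entg k b = Real.log (fb + ε) := by rw [entg, max_eq_left hb]
  have hec : entg k c = Real.log (fc + ε) := by rw [entg, max_eq_left hc]
  have hed : entg k d = Real.log (fd + ε) := by rw [entg, max_eq_left hd]
  set A : ℝ := (fa + ε) * (fb + ε) with hA
  set B : ℝ := (fc + ε) * (fd + ε) with hB
  have hApos : 0 < A := mul_pos (by linarith) (by linarith)
  have hBpos : 0 < B := mul_pos (by linarith) (by linarith)
  set E : ℝ := entg k a + entg k b - entg k c - entg k d with hE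
  have hElog : E = Real.log A - Real.log B := by
    rw [hE, hea, heb, hec, hed, hA, hB,
      Real.log_mul (by linarith) (by linarith), Real.log_mul (by linarith) (by linarith)]
    ring
  set s : ℝ := fc + fd - fa - fb with hs
  have hsplit : fc * fd - fa * fb = (B - A) - ε * s := by
    rw [hB, hA, hs]; ring
  have hsign : E * (B - A) ≤ 0 := by
    rcases le_total A B with h | h
    · have h1 : Real.log A ≤ Real.log B := Real.log_le_log hApos h
      have h2 : E ≤ 0 := by rw [hElog]; linarith
      nlinarith
    · have h1 : Real.log B ≤ Real.log A := Real.log_le_log hBpos h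
      have h2 : 0 ≤ E := by rw [hElog]; linarith
      nlinarith
  set L : ℝ := Real.log k with hL
  have hL0 : 0 ≤ L := Real.log_nonneg (by linarith)
  have hEabs : |E| ≤ 8 * L := by
    have h1 := abs_entg_le hk a
    have h2 := abs_entg_le hk b
    have h3 := abs_entg_le hk c
    have h4 := abs_entg_le hk d
    rw [abs_le] at h1 h2 h3 h4 ⊢
    constructor <;> [skip; skip] <;> (rw [hE]) <;>
      [linarith [h1.1, h2.1, h3.2, h4.2]; linarith [h1.2, h2.2, h3.1, h4.1]]
  have hsabs : |s| ≤ 2 * k := by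
    rw [hs, abs_le]
    constructor <;> [linarith; linarith]
  have hterm2 : -(E * (ε * s)) ≤ 16 := by
    have h2 : -(E * (ε * s)) ≤ |E * (ε * s)| := neg_le_abs _
    have h3 : |E * (ε * s)| = |E| * (ε * |s|) := by
      rw [abs_mul, abs_mul, abs_of_nonneg hε.le]
    have h4 : |E| * (ε * |s|) ≤ (8 * L) * (ε * (2 * k)) := by
      apply mul_le_mul hEabs _ (by positivity) (by positivity)
      exact mul_le_mul_of_nonneg_left hsabs hε.le
    have h5 : (8 * L) * (ε * (2 * k)) = 16 * (L * k⁻¹) := by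
      rw [hεdef]; field_simp; ring
    have h6 : L * k⁻¹ ≤ 1 := by
      have h7 : L ≤ k := by
        have := Real.log_le_sub_one_of_pos hk0
        rw [hL]; linarith
      calc L * k⁻¹ ≤ k * k⁻¹ := mul_le_mul_of_nonneg_right h7 (by positivity)
        _ = 1 := by field_simp
    linarith [h2, h3.le, h4, h5.le]
  calc E * (fc * fd - fa * fb) = E * (B - A) + -(E * (ε * s)) := by rw [hsplit]; ring
    _ ≤ 0 + 16 := add_le_add hsign hterm2
    _ = 16 := by norm_num

-- === from pair.lean ===
lemma pair_identity {K : ℝ} (hK : 3 ≤ K) {q f0 f1 : ℝ → ℝ}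
    (hqmeas : Measurable q)
    (hqb : ∀ᵐ x ∂(volume.restrict (Icc (0:ℝ) 1)), |q x| ≤ K^2)
    {m0 m1 : ℝ} (hm0 : 0 ≤ m0) (hm0' : m0 ≤ K/2) (hm1 : 0 ≤ m1) (hm1' : m1 ≤ K/2)
    (hf0 : ∀ᵐ x ∂(volume.restrict (Icc (0:ℝ) 1)), f0 x = m0 + ∫ t in (0:ℝ)..x, q t)
    (hf1 : ∀ᵐ x ∂(volume.restrict (Icc (0:ℝ) 1)), f1 x = m1 + ∫ t in x..(1:ℝ), q t)
    (hpos : ∀ᵐ x ∂(volume.restrict (Icc (0:ℝ) 1)), 0 ≤ f0 x ∧ 0 ≤ f1 x) :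
    (0 ≤ m0 + ∫ t in (0:ℝ)..1, q t) ∧ (0 ≤ m1 + ∫ t in (0:ℝ)..1, q t) ∧
    (|m0 + ∫ t in (0:ℝ)..1, q t| ≤ K/2 + K^2) ∧
    (|m1 + ∫ t in (0:ℝ)..1, q t| ≤ K/2 + K^2) ∧
    (Phi K (m0 + ∫ t in (0:ℝ)..1, q t)
      = Phi K m0 + ∫ x in Icc (0:ℝ) 1, entg K (f0 x) * q x) ∧
    (Phi K (m1 + ∫ t in (0:ℝ)..1, q t)
      = Phi K m1 + ∫ x in Icc (0:ℝ) 1, entg K (f1 x) * q x) := by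
  have hK0 : (0:ℝ) < K := by linarith
  have hIcc : uIcc (0:ℝ) 1 = Icc (0:ℝ) 1 := uIcc_of_le zero_le_one
  -- integrability of q
  have hvol : volume (Icc (0:ℝ) 1) < ⊤ := by
    rw [Real.volume_Icc]; exact ENNReal.ofReal_lt_top
  have hqint : IntegrableOn q (Icc (0:ℝ) 1) := by
    apply Integrable.mono' (g := fun _ => K^2) ((integrableOn_const_iff).mpr (Or.inr hvol))
      hqmeas.aestronglyMeasurable
    filter_upwards [hqb] with x hx
    rwa [Real.norm_eq_abs]
  have hqII : IntervalIntegrable q volume 0 1 :=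
    (intervalIntegrable_iff_integrableOn_Icc_of_le zero_le_one).mpr hqint
  have hqIIx : ∀ x ∈ Icc (0:ℝ) 1, IntervalIntegrable q volume 0 x := by
    intro x hx
    exact hqII.mono_set (by rw [hIcc]; exact uIcc_subset_Icc (by norm_num) hx)
  -- bound on the total integral of q
  have hqtot : |∫ t in (0:ℝ)..1, q t| ≤ K^2 := by
    refine (intervalIntegral.abs_integral_le_integral_abs zero_le_one).trans ?_
    have h1 : ∫ t in (0:ℝ)..1, |q t| ≤ ∫ t in (0:ℝ)..1, K^2 :=
      intervalIntegral.integral_mono_ae_restrict zero_le_one hqII.abs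
        intervalIntegrable_const hqb
    have h2 : ∫ t in (0:ℝ)..1, (K^2 : ℝ) = K^2 := by simp
    linarith
  -- the primitives
  set u : ℝ → ℝ := fun x => m0 + ∫ t in (0:ℝ)..x, q t with hudef
  set c1 : ℝ := m1 + ∫ t in (0:ℝ)..1, q t with hc1def
  set v : ℝ → ℝ := fun x => c1 + ∫ t in (0:ℝ)..x, -q t with hvdef
  have hu : ∀ x, u x = m0 + ∫ t in (0:ℝ)..x, q t := fun x => rfl
  have hv : ∀ x, v x = c1 + ∫ t in (0:ℝ)..x, -q t := fun x => rfl
  have hu0 : u 0 = m0 := by rw [hu]; simp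
  have hu1 : u 1 = m0 + ∫ t in (0:ℝ)..1, q t := rfl
  have hv0 : v 0 = c1 := by rw [hv]; simp
  have hv1 : v 1 = m1 := by
    rw [hv, intervalIntegral.integral_neg, hc1def]; ring
  -- continuity of primitives on [0,1]
  have hprim : ContinuousOn (fun x => ∫ t in (0:ℝ)..x, q t) (Icc (0:ℝ) 1) := by
    rw [← hIcc]
    exact intervalIntegral.continuousOn_primitive_interval (by rwa [hIcc])
  have hucont : ContinuousOn u (Icc (0:ℝ) 1) := continuousOn_const.add hprim
  have hprimneg : ContinuousOn (fun x => ∫ t in (0:ℝ)..x, -q t) (Icc (0:ℝ) 1) := by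
    have : (fun x => ∫ t in (0:ℝ)..x, -q t) = fun x => -∫ t in (0:ℝ)..x, q t := by
      funext x; exact intervalIntegral.integral_neg
    rw [this]
    exact hprim.neg
  have hvcont : ContinuousOn v (Icc (0:ℝ) 1) := continuousOn_const.add hprimneg
  -- a.e. identification with f0, f1
  have huf0 : ∀ᵐ x ∂(volume.restrict (Icc (0:ℝ) 1)), u x = f0 x := by
    filter_upwards [hf0] with x hx
    rw [hu, hx]
  have hvf1 : ∀ᵐ x ∂(volume.restrict (Icc (0:ℝ) 1)), v x = f1 x := by
    filter_upwards [hf1, ae_restrict_mem measurableSet_Icc] with x hx hxI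
    rw [hv, hx, intervalIntegral.integral_neg, hc1def]
    have hsub : (∫ t in (0:ℝ)..1, q t) - ∫ t in (0:ℝ)..x, q t = ∫ t in x..(1:ℝ), q t :=
      intervalIntegral.integral_interval_sub_left hqII (hqIIx x hxI)
    linarith
  -- nonnegativity of traces
  have hu_nn : ∀ᵐ x ∂(volume.restrict (Icc (0:ℝ) 1)), 0 ≤ u x := by
    filter_upwards [huf0, hpos] with x h1 h2; rw [h1]; exact h2.1
  have hv_nn : ∀ᵐ x ∂(volume.restrict (Icc (0:ℝ) 1)), 0 ≤ v x := by
    filter_upwards [hvf1, hpos] with x h1 h2; rw [h1]; exact h2.2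
  have htr1_nn : 0 ≤ m0 + ∫ t in (0:ℝ)..1, q t := by
    rw [← hu1]
    exact nonneg_of_ae_nonneg_contOn hucont hu_nn (right_mem_Icc.mpr zero_le_one)
  have htr2_nn : 0 ≤ m1 + ∫ t in (0:ℝ)..1, q t := by
    rw [show m1 + ∫ t in (0:ℝ)..1, q t = v 0 from hv0.symm]
    exact nonneg_of_ae_nonneg_contOn hvcont hv_nn (left_mem_Icc.mpr zero_le_one)
  -- bounds on traces
  have htr1_b : |m0 + ∫ t in (0:ℝ)..1, q t| ≤ K/2 + K^2 := by
    rw [abs_le]; rw [abs_le] at hqtot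
    constructor <;> [linarith [hqtot.1]; linarith [hqtot.2]]
  have htr2_b : |m1 + ∫ t in (0:ℝ)..1, q t| ≤ K/2 + K^2 := by
    rw [abs_le]; rw [abs_le] at hqtot
    constructor <;> [linarith [hqtot.1]; linarith [hqtot.2]]
  -- chain rule identities
  have chainA := chain_primitive (entg_mono hK0) (entg_continuous hK0) hqII m0 hu
  have chainB := chain_primitive (entg_mono hK0) (entg_continuous hK0) hqII.neg c1 hv
  -- convert interval integrals to set integrals over Icc and replace u,v by f0,f1
  have hconvA : (∫ x in (0:ℝ)..1, entg K (u x) * q x)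
      = ∫ x in Icc (0:ℝ) 1, entg K (f0 x) * q x := by
    rw [intervalIntegral.integral_of_le zero_le_one, ← integral_Icc_eq_integral_Ioc]
    apply MeasureTheory.integral_congr_ae
    filter_upwards [huf0] with x hx
    rw [hx]
  have hconvB : (∫ x in (0:ℝ)..1, entg K (v x) * -q x)
      = -∫ x in Icc (0:ℝ) 1, entg K (f1 x) * q x := by
    rw [intervalIntegral.integral_of_le zero_le_one, ← integral_Icc_eq_integral_Ioc]
    rw [← MeasureTheory.integral_neg]
    apply MeasureTheory.integral_congr_ae
    filter_upwards [hvf1] with x hx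
    rw [hx]
    simp [mul_neg]
  refine ⟨htr1_nn, htr2_nn, htr1_b, htr2_b, ?_, ?_⟩
  · have h1 : Phi K (u 1) - Phi K (u 0) = ∫ x in (0:ℝ)..1, entg K (u x) * q x := chainA
    rw [hu0, hu1, hconvA] at h1
    linarith
  · have h1 : Phi K (v 1) - Phi K (v 0) = ∫ x in (0:ℝ)..1, entg K (v x) * -q x := chainB
    rw [hv0, hv1, hconvB, hc1def] at h1
    linarith

-- === from final.lean ===
lemma final_stage {K M' : ℝ} (hK : 3 ≤ K) (hM : 0 ≤ M') {T : ℝ → ℝ}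
    (hTmeas : Measurable T)
    (hTnn : ∀ᵐ y ∂(volume.restrict (Icc (0:ℝ) 1)), 0 ≤ T y)
    (hTb : ∀ᵐ y ∂(volume.restrict (Icc (0:ℝ) 1)), |T y| ≤ K/2 + K^2)
    (hE : ∫ y in Icc (0:ℝ) 1, Phi K (T y) ≤ M') :
    ∫ y in {y : ℝ | y ∈ Icc (0:ℝ) 1 ∧ K < T y}, T y ≤ (10*M' + 4200) / Real.log K := by
  have hK0 : (0:ℝ) < K := by linarith
  have hlogK : 0 < Real.log K := Real.log_pos (by linarith)
  set R : ℝ := K/2 + K^2 with hR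
  have hR0 : 0 < R := by rw [hR]; positivity
  set S : Set ℝ := {y : ℝ | y ∈ Icc (0:ℝ) 1 ∧ K < T y} with hS
  have hSm : MeasurableSet S := by
    have h1 : S = Icc (0:ℝ) 1 ∩ T ⁻¹' (Ioi K) := by
      ext y
      simp only [hS, mem_setOf_eq, mem_inter_iff, mem_preimage, mem_Ioi]
    rw [h1]
    exact measurableSet_Icc.inter (hTmeas measurableSet_Ioi)
  have hSsub : S ⊆ Icc (0:ℝ) 1 := fun y hy => hy.1
  have hvol : volume (Icc (0:ℝ) 1) = 1 := by
    rw [Real.volume_Icc]; norm_num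
  have hvolS : (volume S).toReal ≤ 1 := by
    have h1 : volume S ≤ 1 := hvol ▸ measure_mono hSsub
    calc (volume S).toReal ≤ (1 : ℝ≥0∞).toReal := ENNReal.toReal_mono (by norm_num) h1
      _ = 1 := by norm_num
  have hvolS0 : 0 ≤ (volume S).toReal := ENNReal.toReal_nonneg
  have hvolSfin : volume S < ⊤ := by
    apply lt_of_le_of_lt (measure_mono hSsub)
    rw [hvol]; norm_num
  -- integrability
  have hTint : IntegrableOn T (Icc (0:ℝ) 1) := by
    apply Integrable.mono' (g := fun _ => R) ((integrableOn_const_iff).mpr (Or.inr (by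
      rw [hvol]; norm_num))) hTmeas.aestronglyMeasurable
    filter_upwards [hTb] with y hy
    rwa [Real.norm_eq_abs]
  have hTS : IntegrableOn T S := hTint.mono_set hSsub
  obtain ⟨C₁, hC₁⟩ := (isCompact_Icc (a := -R) (b := R)).exists_bound_of_continuousOn
    ((Phi_continuous hK0).continuousOn)
  have hPhiTint : IntegrableOn (fun y => Phi K (T y)) (Icc (0:ℝ) 1) := by
    apply Integrable.mono' (g := fun _ => C₁) ((integrableOn_const_iff).mpr (Or.inr (by
      rw [hvol]; norm_num)))
      (((Phi_continuous hK0).measurable.comp hTmeas).aestronglyMeasurable)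
    filter_upwards [hTb] with y hy
    exact hC₁ (T y) (abs_le.mp hy |> fun h => ⟨by linarith [h.1], h.2⟩)
  have hPhiTS : IntegrableOn (fun y => Phi K (T y)) S := hPhiTint.mono_set hSsub
  -- ae facts on S
  have hTnnS : ∀ᵐ y ∂(volume.restrict S), 0 ≤ T y :=
    ae_restrict_of_ae_restrict_of_subset hSsub hTnn
  have hTbS : ∀ᵐ y ∂(volume.restrict S), |T y| ≤ R :=
    ae_restrict_of_ae_restrict_of_subset hSsub hTb
  have hSmem : ∀ᵐ y ∂(volume.restrict S), y ∈ S := ae_restrict_mem hSm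
  -- ∫_S Phi(T) ≤ M' + 4
  have hSPhi : ∫ y in S, Phi K (T y) ≤ M' + 4 := by
    have hdiff := integral_diff hSm hPhiTint hSsub (f := fun y => Phi K (T y))
    have hlow : -4 ≤ ∫ y in Icc (0:ℝ) 1 \ S, Phi K (T y) := by
      have h1 : ∫ y in Icc (0:ℝ) 1 \ S, (-4 : ℝ) ≤ ∫ y in Icc (0:ℝ) 1 \ S, Phi K (T y) := by
        apply integral_mono_ae ((integrableOn_const_iff (C := (-4:ℝ))).mpr (Or.inr (by
          apply lt_of_le_of_lt (measure_mono diff_subset)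
          rw [hvol]; norm_num))) (hPhiTint.mono_set diff_subset)
        filter_upwards [ae_restrict_of_ae_restrict_of_subset diff_subset hTnn] with y hy
        exact Phi_lb hK hy
      have h2 : ∫ y in Icc (0:ℝ) 1 \ S, (-4 : ℝ)
          = (volume (Icc (0:ℝ) 1 \ S)).toReal * (-4) := by
        rw [setIntegral_const, smul_eq_mul, measureReal_def]
      have h3 : (volume (Icc (0:ℝ) 1 \ S)).toReal ≤ 1 := by
        have h5 : volume (Icc (0:ℝ) 1 \ S) ≤ volume (Icc (0:ℝ) 1) :=
          measure_mono diff_subset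
        rw [hvol] at h5
        calc (volume (Icc (0:ℝ) 1 \ S)).toReal ≤ (1:ℝ≥0∞).toReal :=
            ENNReal.toReal_mono (by norm_num) h5
          _ = 1 := by norm_num
      nlinarith [ENNReal.toReal_nonneg (a := volume (Icc (0:ℝ) 1 \ S))]
    linarith
  rcases le_or_gt 32 K with hbig | hsmall
  · -- big K regime
    have hPhiKK := Phi_k_big hbig
    have hPhiKK0 := Phi_k_nonneg hbig
    have hlogK2 : Real.log 2 ≤ Real.log K / 2 := by
      have h4 : Real.log 4 ≤ Real.log K := Real.log_le_log (by norm_num) (by linarith)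
      have h5 : Real.log 4 = 2 * Real.log 2 := by
        rw [show (4:ℝ) = 2^2 by norm_num, Real.log_pow]; norm_num
      linarith
    have hlogKd : Real.log (K/2) = Real.log K - Real.log 2 :=
      Real.log_div hK0.ne' (by norm_num)
    have hlogK2' : Real.log K / 2 ≤ Real.log (K/2) := by rw [hlogKd]; linarith
    have hlogK2'' : 0 ≤ Real.log (K/2) := by
      have h0 : (0:ℝ) ≤ Real.log K / 2 := by positivity
      linarith [hlogK2']
    -- pointwise on S
    have hpt : ∀ᵐ y ∂(volume.restrict S),
        Phi K K + (T y - K) * Real.log (K/2) ≤ Phi K (T y) := by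
      filter_upwards [hSmem] with y hy
      exact Phi_above_k hK (le_of_lt hy.2)
    set a : ℝ := ∫ y in S, (T y - K) with ha
    have hTK_int : IntegrableOn (fun y => T y - K) S :=
      hTS.sub ((integrableOn_const_iff).mpr (Or.inr hvolSfin))
    have ha0 : 0 ≤ a := by
      rw [ha]
      apply MeasureTheory.integral_nonneg_of_ae
      filter_upwards [hSmem] with y hy
      simp only [Pi.zero_apply]
      linarith [hy.2]
    have hkey : (volume S).toReal * Phi K K + a * Real.log (K/2) ≤ M' + 4 := by
      have h1 : ∫ y in S, (Phi K K + (T y - K) * Real.log (K/2))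
          ≤ ∫ y in S, Phi K (T y) := by
        apply integral_mono_ae
          (((integrableOn_const_iff).mpr (Or.inr hvolSfin)).add (hTK_int.mul_const _)) hPhiTS hpt
      have h2 : ∫ y in S, (Phi K K + (T y - K) * Real.log (K/2))
          = (volume S).toReal * Phi K K + a * Real.log (K/2) := by
        rw [integral_add ((integrableOn_const_iff (C := Phi K K)).mpr (Or.inr hvolSfin)) (hTK_int.mul_const _),
          setIntegral_const, smul_eq_mul, measureReal_def, MeasureTheory.integral_mul_const, ha]
      linarith
    have hintTS : ∫ y in S, T y = a + (volume S).toReal * K := by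
      rw [ha, integral_sub hTS ((integrableOn_const_iff).mpr (Or.inr hvolSfin)),
        setIntegral_const, smul_eq_mul, measureReal_def]
      ring
    -- bound a
    have hab : a ≤ 2 * (M' + 4) / Real.log K := by
      rw [le_div_iff₀ hlogK]
      have h1 : a * (Real.log K / 2) ≤ a * Real.log (K/2) :=
        mul_le_mul_of_nonneg_left hlogK2' ha0
      nlinarith [mul_nonneg hvolS0 hPhiKK0]
    -- bound volume term
    have hvb : (volume S).toReal * K ≤ 8 * (M' + 4) / Real.log K := by
      rw [le_div_iff₀ hlogK]
      have h1 : (volume S).toReal * (K / 8 * Real.log K) ≤ (volume S).toReal * Phi K K :=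
        mul_le_mul_of_nonneg_left hPhiKK hvolS0
      nlinarith [mul_nonneg ha0 hlogK2'']
    rw [hintTS]
    have hfin : a + (volume S).toReal * K ≤ 10 * (M' + 4) / Real.log K := by
      have : 2 * (M' + 4) / Real.log K + 8 * (M' + 4) / Real.log K
          = 10 * (M' + 4) / Real.log K := by ring
      linarith
    refine hfin.trans ?_
    exact (div_le_div_iff_of_pos_right hlogK).mpr (by linarith)
  · -- small K regime
    have h1 : ∫ y in S, T y ≤ ∫ y in S, R := by
      apply integral_mono_ae hTS ((integrableOn_const_iff).mpr (Or.inr hvolSfin))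
      filter_upwards [hTbS] with y hy
      exact (le_abs_self _).trans hy
    have h2 : ∫ y in S, (R:ℝ) = (volume S).toReal * R := by
      rw [setIntegral_const, smul_eq_mul, measureReal_def]
    have h3 : (volume S).toReal * R ≤ R := by nlinarith
    have h4 : R ≤ 1040 := by rw [hR]; nlinarith
    have h5 : (1040 : ℝ) ≤ (10*M' + 4200) / Real.log K := by
      rw [le_div_iff₀ hlogK]
      have h6 : Real.log K ≤ Real.log 32 := Real.log_le_log hK0 hsmall.le
      have h7 : Real.log 32 = 5 * Real.log 2 := by
        rw [show (32:ℝ) = 2^5 by norm_num, Real.log_pow]; norm_num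
      have h8 := Real.log_two_lt_d9
      nlinarith
    linarith

-- === main ===
lemma Qk_abs_le {k : ℝ} {F : Fin 4 → ℝ → ℝ → ℝ} {x y : ℝ} (hk : 0 < k)
    (h : ∀ i, 0 ≤ F i x y) : |Qk k F x y| ≤ k^2 := by
  have h0 := truncK_nonneg hk (h 0)
  have h1 := truncK_nonneg hk (h 1)
  have h2 := truncK_nonneg hk (h 2)
  have h3 := truncK_nonneg hk (h 3)
  have g0 := truncK_le_k hk (h 0)
  have g1 := truncK_le_k hk (h 1)
  have g2 := truncK_le_k hk (h 2)
  have g3 := truncK_le_k hk (h 3)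
  rw [Qk, abs_le]
  constructor <;> nlinarith


/-- bound `c_b / log k` on the outgoing boundary fluxes above level `k`
for solutions of the truncated systems; the outgoing traces are the ones read off from
the mild form. -/
theorem truncated_outgoing_flux_bound (fb : Fin 4 → ℝ → ℝ)
    (hfb : IsBoundaryData fb) (hent : FiniteEntropy fb) :
    ∃ c : ℝ, ∀ k : ℕ, 2 < k → ∀ F : Fin 4 → ℝ → ℝ → ℝ, MildTrunc (k : ℝ) fb F →
      (∫ y in {y : ℝ | y ∈ Icc (0:ℝ) 1 ∧ (k : ℝ) < trace1 (k : ℝ) fb F y},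
          trace1 (k : ℝ) fb F y)
      + (∫ y in {y : ℝ | y ∈ Icc (0:ℝ) 1 ∧ (k : ℝ) < trace2 (k : ℝ) fb F y},
          trace2 (k : ℝ) fb F y)
      + (∫ x in {x : ℝ | x ∈ Icc (0:ℝ) 1 ∧ (k : ℝ) < trace3 (k : ℝ) fb F x},
          trace3 (k : ℝ) fb F x)
      + (∫ x in {x : ℝ | x ∈ Icc (0:ℝ) 1 ∧ (k : ℝ) < trace4 (k : ℝ) fb F x},
          trace4 (k : ℝ) fb F x)
      ≤ c / Real.log k := by
  classical
  set M : ℝ := ∑ i : Fin 4, ∫ u in Icc (0:ℝ) 1, fb i u * Real.log (1 + fb i u) with hMdef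
  have hM0 : 0 ≤ M := by
    apply Finset.sum_nonneg
    intro i _
    apply setIntegral_nonneg measurableSet_Icc
    intro u hu
    have h1 := (hfb i).2.1 u hu
    have h2 : 0 ≤ Real.log (1 + fb i u) := Real.log_nonneg (by linarith)
    exact mul_nonneg h1 h2
  refine ⟨40 * (M + 28) + 16800, ?_⟩
  intro k hk F hF
  set K : ℝ := (k : ℝ) with hKdef
  have hK3 : 3 ≤ K := by
    rw [hKdef]
    exact_mod_cast hk
  have hK0 : (0:ℝ) < K := by linarith
  have hlogK : 0 < Real.log K := Real.log_pos (by linarith)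
  obtain ⟨hFmeas, hFpos, hFint, heq0, heq1, heq2, heq3⟩ := hF
  set Ic : Set ℝ := Icc (0:ℝ) 1 with hIc
  set μ1 : Measure ℝ := volume.restrict Ic with hμ1
  have hvolIc : volume Ic = 1 := by rw [hIc, Real.volume_Icc]; norm_num
  have hvolIcfin : volume Ic < ⊤ := by rw [hvolIc]; norm_num
  have hμ1univ : μ1 univ = 1 := by rw [hμ1, Measure.restrict_apply_univ, hvolIc]
  -- measurability of Q
  have hQm : Measurable (fun p : ℝ×ℝ => Qk K F p.1 p.2) := by
    have h1 : ∀ i : Fin 4, Measurable (fun p : ℝ×ℝ => truncK K (F i p.1 p.2)) :=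
      fun i => measurable_truncK.comp (hFmeas i)
    exact ((h1 2).mul (h1 3)).sub ((h1 0).mul (h1 1))
  -- product structure
  have hsqr : volume.restrict UnitSq = μ1.prod μ1 := by
    rw [hμ1, hIc, Measure.prod_restrict, ← Measure.volume_eq_prod]
    rfl
  -- master a.e. statement on the product
  have hmaster : ∀ᵐ p : ℝ×ℝ ∂(μ1.prod μ1),
      (∀ i, 0 ≤ F i p.1 p.2) ∧
      (F 0 p.1 p.2 = min (fb 0 p.2) (K / 2) + ∫ X in (0:ℝ)..p.1, Qk K F X p.2) ∧
      (F 1 p.1 p.2 = min (fb 1 p.2) (K / 2) + ∫ X in p.1..(1:ℝ), Qk K F X p.2) ∧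
      (F 2 p.1 p.2 = min (fb 2 p.1) (K / 2) - ∫ Y in (0:ℝ)..p.2, Qk K F p.1 Y) ∧
      (F 3 p.1 p.2 = min (fb 3 p.1) (K / 2) - ∫ Y in p.2..(1:ℝ), Qk K F p.1 Y) := by
    rw [← hsqr]
    filter_upwards [(ae_all_iff).mpr hFpos, heq0, heq1, heq2, heq3] with p h1 h2 h3 h4 h5
    exact ⟨h1, h2, h3, h4, h5⟩
  have hswap := (Measure.measurePreserving_swap (μ := μ1) (ν := μ1)).quasiMeasurePreserving.ae hmaster
  have hyslice := Measure.ae_ae_of_ae_prod hswap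
  have hxslice := Measure.ae_ae_of_ae_prod hmaster
  -- trace measurability
  have hQsm : StronglyMeasurable (fun p : ℝ×ℝ => Qk K F p.1 p.2) := hQm.stronglyMeasurable
  have hWmeas : Measurable (fun y : ℝ => ∫ x in Ioc (0:ℝ) 1, Qk K F x y) :=
    (hQsm.integral_prod_left' (μ := volume.restrict (Ioc (0:ℝ) 1))).measurable
  have hVmeas : Measurable (fun x : ℝ => ∫ y in Ioc (0:ℝ) 1, Qk K F x y) :=
    (hQsm.integral_prod_right' (ν := volume.restrict (Ioc (0:ℝ) 1))).measurable
  have htr1f : trace1 K fb F = fun y => min (fb 0 y) (K/2) + ∫ x in Ioc (0:ℝ) 1, Qk K F x y := by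
    funext y; rw [trace1, intervalIntegral.integral_of_le zero_le_one]
  have htr2f : trace2 K fb F = fun y => min (fb 1 y) (K/2) + ∫ x in Ioc (0:ℝ) 1, Qk K F x y := by
    funext y; rw [trace2, intervalIntegral.integral_of_le zero_le_one]
  have htr3f : trace3 K fb F = fun x => min (fb 2 x) (K/2) - ∫ y in Ioc (0:ℝ) 1, Qk K F x y := by
    funext x; rw [trace3, intervalIntegral.integral_of_le zero_le_one]
  have htr4f : trace4 K fb F = fun x => min (fb 3 x) (K/2) - ∫ y in Ioc (0:ℝ) 1, Qk K F x y := by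
    funext x; rw [trace4, intervalIntegral.integral_of_le zero_le_one]
  have htr1m : Measurable (trace1 K fb F) := by
    rw [htr1f]; exact ((hfb 0).1.min measurable_const).add hWmeas
  have htr2m : Measurable (trace2 K fb F) := by
    rw [htr2f]; exact ((hfb 1).1.min measurable_const).add hWmeas
  have htr3m : Measurable (trace3 K fb F) := by
    rw [htr3f]; exact ((hfb 2).1.min measurable_const).sub hVmeas
  have htr4m : Measurable (trace4 K fb F) := by
    rw [htr4f]; exact ((hfb 3).1.min measurable_const).sub hVmeas
  -- per-slice identities, y-direction
  have hslice1 : ∀ᵐ y ∂μ1,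
      (0 ≤ trace1 K fb F y) ∧ (0 ≤ trace2 K fb F y) ∧
      (|trace1 K fb F y| ≤ K/2 + K^2) ∧ (|trace2 K fb F y| ≤ K/2 + K^2) ∧
      (Phi K (trace1 K fb F y) = Phi K (min (fb 0 y) (K/2))
        + ∫ x in Ic, entg K (F 0 x y) * Qk K F x y) ∧
      (Phi K (trace2 K fb F y) = Phi K (min (fb 1 y) (K/2))
        + ∫ x in Ic, entg K (F 1 x y) * Qk K F x y) := by
    filter_upwards [hyslice, ae_restrict_mem measurableSet_Icc] with y hy hyI
    have hqmeas : Measurable (fun X => Qk K F X y) :=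
      hQm.comp (measurable_id.prodMk measurable_const)
    have hqb : ∀ᵐ x ∂(volume.restrict (Icc (0:ℝ) 1)), |Qk K F x y| ≤ K^2 := by
      filter_upwards [hy] with x hx
      exact Qk_abs_le hK0 hx.1
    have hm0 : 0 ≤ min (fb 0 y) (K/2) := le_min ((hfb 0).2.1 y hyI) (by positivity)
    have hm0' : min (fb 0 y) (K/2) ≤ K/2 := min_le_right _ _
    have hm1 : 0 ≤ min (fb 1 y) (K/2) := le_min ((hfb 1).2.1 y hyI) (by positivity)
    have hm1' : min (fb 1 y) (K/2) ≤ K/2 := min_le_right _ _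
    have hf0ae : ∀ᵐ x ∂(volume.restrict (Icc (0:ℝ) 1)),
        F 0 x y = min (fb 0 y) (K/2) + ∫ t in (0:ℝ)..x, Qk K F t y := by
      filter_upwards [hy] with x hx
      exact hx.2.1
    have hf1ae : ∀ᵐ x ∂(volume.restrict (Icc (0:ℝ) 1)),
        F 1 x y = min (fb 1 y) (K/2) + ∫ t in x..(1:ℝ), Qk K F t y := by
      filter_upwards [hy] with x hx
      exact hx.2.2.1
    have hposae : ∀ᵐ x ∂(volume.restrict (Icc (0:ℝ) 1)), 0 ≤ F 0 x y ∧ 0 ≤ F 1 x y := by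
      filter_upwards [hy] with x hx
      exact ⟨hx.1 0, hx.1 1⟩
    have hpair := pair_identity hK3 hqmeas hqb hm0 hm0' hm1 hm1' hf0ae hf1ae hposae
    exact ⟨hpair.1, hpair.2.1, hpair.2.2.1, hpair.2.2.2.1, hpair.2.2.2.2.1, hpair.2.2.2.2.2⟩
  -- per-slice identities, x-direction (using q = -Q)
  have hslice2 : ∀ᵐ x ∂μ1,
      (0 ≤ trace3 K fb F x) ∧ (0 ≤ trace4 K fb F x) ∧
      (|trace3 K fb F x| ≤ K/2 + K^2) ∧ (|trace4 K fb F x| ≤ K/2 + K^2) ∧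
      (Phi K (trace3 K fb F x) = Phi K (min (fb 2 x) (K/2))
        + ∫ y in Ic, entg K (F 2 x y) * (-Qk K F x y)) ∧
      (Phi K (trace4 K fb F x) = Phi K (min (fb 3 x) (K/2))
        + ∫ y in Ic, entg K (F 3 x y) * (-Qk K F x y)) := by
    filter_upwards [hxslice, ae_restrict_mem measurableSet_Icc] with x hx hxI
    have hqmeas : Measurable (fun Y => -Qk K F x Y) :=
      (hQm.comp (measurable_const.prodMk measurable_id)).neg
    have hqb : ∀ᵐ y ∂(volume.restrict (Icc (0:ℝ) 1)), |(-Qk K F x y)| ≤ K^2 := by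
      filter_upwards [hx] with y hy
      rw [abs_neg]
      exact Qk_abs_le hK0 hy.1
    have hm0 : 0 ≤ min (fb 2 x) (K/2) := le_min ((hfb 2).2.1 x hxI) (by positivity)
    have hm0' : min (fb 2 x) (K/2) ≤ K/2 := min_le_right _ _
    have hm1 : 0 ≤ min (fb 3 x) (K/2) := le_min ((hfb 3).2.1 x hxI) (by positivity)
    have hm1' : min (fb 3 x) (K/2) ≤ K/2 := min_le_right _ _
    have hf0ae : ∀ᵐ y ∂(volume.restrict (Icc (0:ℝ) 1)),
        F 2 x y = min (fb 2 x) (K/2) + ∫ t in (0:ℝ)..y, -Qk K F x t := by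
      filter_upwards [hx] with y hy
      rw [hy.2.2.2.1, intervalIntegral.integral_neg]
      ring
    have hf1ae : ∀ᵐ y ∂(volume.restrict (Icc (0:ℝ) 1)),
        F 3 x y = min (fb 3 x) (K/2) + ∫ t in y..(1:ℝ), -Qk K F x t := by
      filter_upwards [hx] with y hy
      rw [hy.2.2.2.2, intervalIntegral.integral_neg]
      ring
    have hposae : ∀ᵐ y ∂(volume.restrict (Icc (0:ℝ) 1)), 0 ≤ F 2 x y ∧ 0 ≤ F 3 x y := by
      filter_upwards [hx] with y hy
      exact ⟨hy.1 2, hy.1 3⟩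
    have hpair := pair_identity hK3 hqmeas hqb hm0 hm0' hm1 hm1' hf0ae hf1ae hposae
    have htr3 : trace3 K fb F x = min (fb 2 x) (K/2) + ∫ t in (0:ℝ)..1, -Qk K F x t := by
      rw [trace3, intervalIntegral.integral_neg]
      ring
    have htr4 : trace4 K fb F x = min (fb 3 x) (K/2) + ∫ t in (0:ℝ)..1, -Qk K F x t := by
      rw [trace4, intervalIntegral.integral_neg]
      ring
    rw [htr3, htr4]
    exact ⟨hpair.1, hpair.2.1, hpair.2.2.1, hpair.2.2.2.1, hpair.2.2.2.2.1, hpair.2.2.2.2.2⟩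
  -- volume of the square
  have hvolSq : volume UnitSq = 1 := by
    rw [show UnitSq = Ic ×ˢ Ic from by rw [hIc]; rfl, Measure.volume_eq_prod,
      Measure.prod_prod, hvolIc]
    norm_num
  have hprodfin : (μ1.prod μ1) univ = 1 := by
    rw [← hsqr, Measure.restrict_apply_univ, hvolSq]
  -- integrability of Phi ∘ bounded measurable functions
  set R : ℝ := K/2 + K^2 with hRdef
  have hR0 : 0 < R := by rw [hRdef]; positivity
  obtain ⟨C₁, hC₁⟩ := (isCompact_Icc (a := -R) (b := R)).exists_bound_of_continuousOn
    ((Phi_continuous hK0).continuousOn)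
  have hPhiTr : ∀ (T : ℝ → ℝ), Measurable T → (∀ᵐ y ∂μ1, |T y| ≤ R) →
      IntegrableOn (fun y => Phi K (T y)) Ic := by
    intro T hTm hTb
    apply Integrable.mono' (g := fun _ => C₁) ((integrableOn_const_iff).mpr (Or.inr hvolIcfin))
      (((Phi_continuous hK0).measurable.comp hTm).aestronglyMeasurable)
    filter_upwards [hTb] with y hy
    exact hC₁ (T y) ⟨by linarith [(abs_le.mp hy).1], (abs_le.mp hy).2⟩
  have htr1b : ∀ᵐ y ∂μ1, |trace1 K fb F y| ≤ R := by
    filter_upwards [hslice1] with y h; exact h.2.2.1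
  have htr2b : ∀ᵐ y ∂μ1, |trace2 K fb F y| ≤ R := by
    filter_upwards [hslice1] with y h; exact h.2.2.2.1
  have htr3b : ∀ᵐ x ∂μ1, |trace3 K fb F x| ≤ R := by
    filter_upwards [hslice2] with x h; exact h.2.2.1
  have htr4b : ∀ᵐ x ∂μ1, |trace4 K fb F x| ≤ R := by
    filter_upwards [hslice2] with x h; exact h.2.2.2.1
  have htr1nn : ∀ᵐ y ∂μ1, 0 ≤ trace1 K fb F y := by
    filter_upwards [hslice1] with y h; exact h.1
  have htr2nn : ∀ᵐ y ∂μ1, 0 ≤ trace2 K fb F y := by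
    filter_upwards [hslice1] with y h; exact h.2.1
  have htr3nn : ∀ᵐ x ∂μ1, 0 ≤ trace3 K fb F x := by
    filter_upwards [hslice2] with x h; exact h.1
  have htr4nn : ∀ᵐ x ∂μ1, 0 ≤ trace4 K fb F x := by
    filter_upwards [hslice2] with x h; exact h.2.1
  have hmb : ∀ i : Fin 4, ∀ᵐ y ∂μ1, |min (fb i y) (K/2)| ≤ R := by
    intro i
    filter_upwards [ae_restrict_mem measurableSet_Icc] with y hy
    have h1 : 0 ≤ min (fb i y) (K/2) := le_min ((hfb i).2.1 y hy) (by positivity)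
    have h2 : min (fb i y) (K/2) ≤ K/2 := min_le_right _ _
    rw [abs_of_nonneg h1, hRdef]
    nlinarith
  have hPhiM : ∀ i : Fin 4, IntegrableOn (fun y => Phi K (min (fb i y) (K/2))) Ic :=
    fun i => hPhiTr _ ((hfb i).1.min measurable_const) (hmb i)
  -- a.e. positivity on the product
  have hposprod : ∀ᵐ p : ℝ×ℝ ∂(μ1.prod μ1), ∀ i, 0 ≤ F i p.1 p.2 := by
    rw [← hsqr]
    exact (ae_all_iff).mpr hFpos
  -- gains/losses integrable on the product
  have hlogK0 : 0 ≤ Real.log K := hlogK.le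
  have hGint : ∀ i : Fin 4, Integrable
      (fun p : ℝ×ℝ => entg K (F i p.1 p.2) * Qk K F p.1 p.2) (μ1.prod μ1) := by
    intro i
    have hmeas : Measurable fun p : ℝ×ℝ => entg K (F i p.1 p.2) * Qk K F p.1 p.2 :=
      ((entg_continuous hK0).measurable.comp (hFmeas i)).mul hQm
    apply Integrable.mono' (g := fun _ => 2*Real.log K * K^2) ?_ hmeas.aestronglyMeasurable ?_
    · rw [← hsqr]
      apply (integrableOn_const_iff).mpr (Or.inr (by rw [hvolSq]; norm_num))
    · filter_upwards [hposprod] with p hp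
      rw [Real.norm_eq_abs, abs_mul]
      exact mul_le_mul (abs_entg_le hK3 _) (Qk_abs_le hK0 hp) (abs_nonneg _)
        (by positivity)
  have hGint2 : Integrable
      (fun p : ℝ×ℝ => entg K (F 2 p.1 p.2) * (-Qk K F p.1 p.2)) (μ1.prod μ1) := by
    have h1 : (fun p : ℝ×ℝ => entg K (F 2 p.1 p.2) * (-Qk K F p.1 p.2))
        = fun p : ℝ×ℝ => -(entg K (F 2 p.1 p.2) * Qk K F p.1 p.2) := by
      funext p; ring
    rw [h1]
    exact (hGint 2).neg
  have hGint3 : Integrable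
      (fun p : ℝ×ℝ => entg K (F 3 p.1 p.2) * (-Qk K F p.1 p.2)) (μ1.prod μ1) := by
    have h1 : (fun p : ℝ×ℝ => entg K (F 3 p.1 p.2) * (-Qk K F p.1 p.2))
        = fun p : ℝ×ℝ => -(entg K (F 3 p.1 p.2) * Qk K F p.1 p.2) := by
      funext p; ring
    rw [h1]
    exact (hGint 3).neg
  -- inner integrals integrable
  have hInner0 : Integrable (fun y => ∫ x in Ic, entg K (F 0 x y) * Qk K F x y) μ1 :=
    (hGint 0).swap.integral_prod_left
  have hInner1 : Integrable (fun y => ∫ x in Ic, entg K (F 1 x y) * Qk K F x y) μ1 :=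
    (hGint 1).swap.integral_prod_left
  have hInner2 : Integrable (fun x => ∫ y in Ic, entg K (F 2 x y) * (-Qk K F x y)) μ1 :=
    hGint2.integral_prod_left
  have hInner3 : Integrable (fun x => ∫ y in Ic, entg K (F 3 x y) * (-Qk K F x y)) μ1 :=
    hGint3.integral_prod_left
  -- Fubini equalities
  have hFub0 : (∫ y in Ic, (∫ x in Ic, entg K (F 0 x y) * Qk K F x y))
      = ∫ z : ℝ×ℝ, entg K (F 0 z.1 z.2) * Qk K F z.1 z.2 ∂(μ1.prod μ1) := by
    have ha := MeasureTheory.integral_integral (μ := μ1) (ν := μ1)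
      (f := fun y x => entg K (F 0 x y) * Qk K F x y) ((hGint 0).swap)
    have hb := MeasureTheory.integral_prod_swap (μ := μ1) (ν := μ1)
      (f := fun z : ℝ×ℝ => entg K (F 0 z.1 z.2) * Qk K F z.1 z.2)
    exact ha.trans hb
  have hFub1 : (∫ y in Ic, (∫ x in Ic, entg K (F 1 x y) * Qk K F x y))
      = ∫ z : ℝ×ℝ, entg K (F 1 z.1 z.2) * Qk K F z.1 z.2 ∂(μ1.prod μ1) := by
    have ha := MeasureTheory.integral_integral (μ := μ1) (ν := μ1)
      (f := fun y x => entg K (F 1 x y) * Qk K F x y) ((hGint 1).swap)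
    have hb := MeasureTheory.integral_prod_swap (μ := μ1) (ν := μ1)
      (f := fun z : ℝ×ℝ => entg K (F 1 z.1 z.2) * Qk K F z.1 z.2)
    exact ha.trans hb
  have hFub2 : (∫ x in Ic, (∫ y in Ic, entg K (F 2 x y) * (-Qk K F x y)))
      = ∫ z : ℝ×ℝ, entg K (F 2 z.1 z.2) * (-Qk K F z.1 z.2) ∂(μ1.prod μ1) :=
    MeasureTheory.integral_integral (μ := μ1) (ν := μ1)
      (f := fun x y => entg K (F 2 x y) * (-Qk K F x y)) hGint2
  have hFub3 : (∫ x in Ic, (∫ y in Ic, entg K (F 3 x y) * (-Qk K F x y)))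
      = ∫ z : ℝ×ℝ, entg K (F 3 z.1 z.2) * (-Qk K F z.1 z.2) ∂(μ1.prod μ1) :=
    MeasureTheory.integral_integral (μ := μ1) (ν := μ1)
      (f := fun x y => entg K (F 3 x y) * (-Qk K F x y)) hGint3
  -- entropy balance identities
  have hE1 : (∫ y in Ic, Phi K (trace1 K fb F y))
      = (∫ y in Ic, Phi K (min (fb 0 y) (K/2)))
        + ∫ z : ℝ×ℝ, entg K (F 0 z.1 z.2) * Qk K F z.1 z.2 ∂(μ1.prod μ1) := by
    have h1 : (∫ y in Ic, Phi K (trace1 K fb F y))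
        = ∫ y in Ic, (Phi K (min (fb 0 y) (K/2))
            + ∫ x in Ic, entg K (F 0 x y) * Qk K F x y) := by
      apply MeasureTheory.integral_congr_ae
      filter_upwards [hslice1] with y h
      exact h.2.2.2.2.1
    rw [h1, MeasureTheory.integral_add (hPhiM 0) hInner0, hFub0]
  have hE2 : (∫ y in Ic, Phi K (trace2 K fb F y))
      = (∫ y in Ic, Phi K (min (fb 1 y) (K/2)))
        + ∫ z : ℝ×ℝ, entg K (F 1 z.1 z.2) * Qk K F z.1 z.2 ∂(μ1.prod μ1) := by
    have h1 : (∫ y in Ic, Phi K (trace2 K fb F y))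
        = ∫ y in Ic, (Phi K (min (fb 1 y) (K/2))
            + ∫ x in Ic, entg K (F 1 x y) * Qk K F x y) := by
      apply MeasureTheory.integral_congr_ae
      filter_upwards [hslice1] with y h
      exact h.2.2.2.2.2
    rw [h1, MeasureTheory.integral_add (hPhiM 1) hInner1, hFub1]
  have hE3 : (∫ x in Ic, Phi K (trace3 K fb F x))
      = (∫ x in Ic, Phi K (min (fb 2 x) (K/2)))
        + ∫ z : ℝ×ℝ, entg K (F 2 z.1 z.2) * (-Qk K F z.1 z.2) ∂(μ1.prod μ1) := by
    have h1 : (∫ x in Ic, Phi K (trace3 K fb F x))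
        = ∫ x in Ic, (Phi K (min (fb 2 x) (K/2))
            + ∫ y in Ic, entg K (F 2 x y) * (-Qk K F x y)) := by
      apply MeasureTheory.integral_congr_ae
      filter_upwards [hslice2] with x h
      exact h.2.2.2.2.1
    rw [h1, MeasureTheory.integral_add (hPhiM 2) hInner2, hFub2]
  have hE4 : (∫ x in Ic, Phi K (trace4 K fb F x))
      = (∫ x in Ic, Phi K (min (fb 3 x) (K/2)))
        + ∫ z : ℝ×ℝ, entg K (F 3 z.1 z.2) * (-Qk K F z.1 z.2) ∂(μ1.prod μ1) := by
    have h1 : (∫ x in Ic, Phi K (trace4 K fb F x))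
        = ∫ x in Ic, (Phi K (min (fb 3 x) (K/2))
            + ∫ y in Ic, entg K (F 3 x y) * (-Qk K F x y)) := by
      apply MeasureTheory.integral_congr_ae
      filter_upwards [hslice2] with x h
      exact h.2.2.2.2.2
    rw [h1, MeasureTheory.integral_add (hPhiM 3) hInner3, hFub3]
  -- dissipation bound
  have hIsum : (∫ z : ℝ×ℝ, entg K (F 0 z.1 z.2) * Qk K F z.1 z.2 ∂(μ1.prod μ1))
      + (∫ z : ℝ×ℝ, entg K (F 1 z.1 z.2) * Qk K F z.1 z.2 ∂(μ1.prod μ1))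
      + (∫ z : ℝ×ℝ, entg K (F 2 z.1 z.2) * (-Qk K F z.1 z.2) ∂(μ1.prod μ1))
      + (∫ z : ℝ×ℝ, entg K (F 3 z.1 z.2) * (-Qk K F z.1 z.2) ∂(μ1.prod μ1)) ≤ 16 := by
    have hI01 : Integrable (fun z : ℝ×ℝ => entg K (F 0 z.1 z.2) * Qk K F z.1 z.2
        + entg K (F 1 z.1 z.2) * Qk K F z.1 z.2) (μ1.prod μ1) := (hGint 0).add (hGint 1)
    have hI012 : Integrable (fun z : ℝ×ℝ => entg K (F 0 z.1 z.2) * Qk K F z.1 z.2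
        + entg K (F 1 z.1 z.2) * Qk K F z.1 z.2
        + entg K (F 2 z.1 z.2) * (-Qk K F z.1 z.2)) (μ1.prod μ1) := hI01.add hGint2
    have hI0123 : Integrable (fun z : ℝ×ℝ => entg K (F 0 z.1 z.2) * Qk K F z.1 z.2
        + entg K (F 1 z.1 z.2) * Qk K F z.1 z.2
        + entg K (F 2 z.1 z.2) * (-Qk K F z.1 z.2)
        + entg K (F 3 z.1 z.2) * (-Qk K F z.1 z.2)) (μ1.prod μ1) := hI012.add hGint3
    have hsum : (∫ z : ℝ×ℝ, entg K (F 0 z.1 z.2) * Qk K F z.1 z.2 ∂(μ1.prod μ1))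
        + (∫ z : ℝ×ℝ, entg K (F 1 z.1 z.2) * Qk K F z.1 z.2 ∂(μ1.prod μ1))
        + (∫ z : ℝ×ℝ, entg K (F 2 z.1 z.2) * (-Qk K F z.1 z.2) ∂(μ1.prod μ1))
        + (∫ z : ℝ×ℝ, entg K (F 3 z.1 z.2) * (-Qk K F z.1 z.2) ∂(μ1.prod μ1))
        = ∫ z : ℝ×ℝ, (entg K (F 0 z.1 z.2) * Qk K F z.1 z.2
            + entg K (F 1 z.1 z.2) * Qk K F z.1 z.2
            + entg K (F 2 z.1 z.2) * (-Qk K F z.1 z.2)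
            + entg K (F 3 z.1 z.2) * (-Qk K F z.1 z.2)) ∂(μ1.prod μ1) := by
      rw [← MeasureTheory.integral_add (hGint 0) (hGint 1),
        ← MeasureTheory.integral_add hI01 hGint2,
        ← MeasureTheory.integral_add hI012 hGint3]
    rw [hsum]
    have hptw : ∀ᵐ z : ℝ×ℝ ∂(μ1.prod μ1),
        entg K (F 0 z.1 z.2) * Qk K F z.1 z.2
          + entg K (F 1 z.1 z.2) * Qk K F z.1 z.2
          + entg K (F 2 z.1 z.2) * (-Qk K F z.1 z.2)
          + entg K (F 3 z.1 z.2) * (-Qk K F z.1 z.2) ≤ 16 := by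
      filter_upwards [hposprod] with z hz
      have h1 : entg K (F 0 z.1 z.2) * Qk K F z.1 z.2
          + entg K (F 1 z.1 z.2) * Qk K F z.1 z.2
          + entg K (F 2 z.1 z.2) * (-Qk K F z.1 z.2)
          + entg K (F 3 z.1 z.2) * (-Qk K F z.1 z.2)
          = (entg K (F 0 z.1 z.2) + entg K (F 1 z.1 z.2)
              - entg K (F 2 z.1 z.2) - entg K (F 3 z.1 z.2)) * Qk K F z.1 z.2 := by
        ring
      rw [h1, show Qk K F z.1 z.2 = truncK K (F 2 z.1 z.2) * truncK K (F 3 z.1 z.2)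
          - truncK K (F 0 z.1 z.2) * truncK K (F 1 z.1 z.2) from rfl]
      exact dissipation_pointwise hK3 (hz 0) (hz 1) (hz 2) (hz 3)
    have hci : Integrable (fun _ : ℝ×ℝ => (16:ℝ)) (μ1.prod μ1) := by
      rw [← hsqr]
      exact (integrableOn_const_iff).mpr (Or.inr (by rw [hvolSq]; norm_num))
    have h2 := MeasureTheory.integral_mono_ae hI0123 hci hptw
    have hconst : (∫ _ : ℝ×ℝ, (16:ℝ) ∂(μ1.prod μ1)) = 16 := by
      rw [MeasureTheory.integral_const, measureReal_def, hprodfin]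
      simp
    linarith
  -- boundary entropy bound
  have hPle : ∀ i : Fin 4, (∫ y in Ic, Phi K (min (fb i y) (K/2)))
      ≤ ∫ y in Ic, fb i y * Real.log (1 + fb i y) := by
    intro i
    apply setIntegral_mono_on (hPhiM i) (hent i) measurableSet_Icc
    intro u hu
    have h0 := (hfb i).2.1 u hu
    have h1 : 0 ≤ min (fb i u) (K/2) := le_min h0 (by positivity)
    have h2 : min (fb i u) (K/2) ≤ fb i u := min_le_left _ _
    have h3 := Phi_le hK3 h1
    have h4 : Real.log (1 + min (fb i u) (K/2)) ≤ Real.log (1 + fb i u) :=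
      Real.log_le_log (by linarith) (by linarith)
    have h5 : 0 ≤ Real.log (1 + min (fb i u) (K/2)) := Real.log_nonneg (by linarith)
    calc Phi K (min (fb i u) (K/2))
        ≤ min (fb i u) (K/2) * Real.log (1 + min (fb i u) (K/2)) := h3
      _ ≤ fb i u * Real.log (1 + fb i u) := mul_le_mul h2 h4 h5 h0
  -- total entropy bound
  have hEsum : (∫ y in Ic, Phi K (trace1 K fb F y)) + (∫ y in Ic, Phi K (trace2 K fb F y))
      + (∫ x in Ic, Phi K (trace3 K fb F x)) + (∫ x in Ic, Phi K (trace4 K fb F x))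
      ≤ M + 16 := by
    rw [hE1, hE2, hE3, hE4]
    have h1 := hPle 0
    have h2 := hPle 1
    have h3 := hPle 2
    have h4 := hPle 3
    have hM4 : M = (∫ y in Ic, fb 0 y * Real.log (1 + fb 0 y))
        + (∫ y in Ic, fb 1 y * Real.log (1 + fb 1 y))
        + (∫ y in Ic, fb 2 y * Real.log (1 + fb 2 y))
        + (∫ y in Ic, fb 3 y * Real.log (1 + fb 3 y)) := by
      rw [hMdef, Fin.sum_univ_four]
    linarith [hIsum]
  -- lower bounds for each entropy term
  have hElb : ∀ (T : ℝ → ℝ), Measurable T → (∀ᵐ y ∂μ1, 0 ≤ T y) → (∀ᵐ y ∂μ1, |T y| ≤ R) →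
      (-4:ℝ) ≤ ∫ y in Ic, Phi K (T y) := by
    intro T hTm hTnn hTb
    have h1 : (∫ y in Ic, (-4:ℝ)) ≤ ∫ y in Ic, Phi K (T y) := by
      apply MeasureTheory.integral_mono_ae ((integrableOn_const_iff (C := (-4:ℝ))).mpr (Or.inr hvolIcfin))
        (hPhiTr T hTm hTb)
      filter_upwards [hTnn] with y hy
      exact Phi_lb hK3 hy
    have h2 : (∫ y in Ic, (-4:ℝ)) = -4 := by
      rw [MeasureTheory.setIntegral_const, measureReal_def, hvolIc]
      simp
    linarith
  have hlb1 := hElb _ htr1m htr1nn htr1b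
  have hlb2 := hElb _ htr2m htr2nn htr2b
  have hlb3 := hElb _ htr3m htr3nn htr3b
  have hlb4 := hElb _ htr4m htr4nn htr4b
  have hM28 : (0:ℝ) ≤ M + 28 := by linarith
  have hEub1 : (∫ y in Ic, Phi K (trace1 K fb F y)) ≤ M + 28 := by linarith
  have hEub2 : (∫ y in Ic, Phi K (trace2 K fb F y)) ≤ M + 28 := by linarith
  have hEub3 : (∫ x in Ic, Phi K (trace3 K fb F x)) ≤ M + 28 := by linarith
  have hEub4 : (∫ x in Ic, Phi K (trace4 K fb F x)) ≤ M + 28 := by linarith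
  -- final stage for each trace
  have hfin1 : (∫ y in {y : ℝ | y ∈ Ic ∧ K < trace1 K fb F y}, trace1 K fb F y)
      ≤ (10*(M+28) + 4200) / Real.log K :=
    final_stage hK3 hM28 htr1m htr1nn htr1b hEub1
  have hfin2 : (∫ y in {y : ℝ | y ∈ Ic ∧ K < trace2 K fb F y}, trace2 K fb F y)
      ≤ (10*(M+28) + 4200) / Real.log K :=
    final_stage hK3 hM28 htr2m htr2nn htr2b hEub2
  have hfin3 : (∫ x in {x : ℝ | x ∈ Ic ∧ K < trace3 K fb F x}, trace3 K fb F x)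
      ≤ (10*(M+28) + 4200) / Real.log K :=
    final_stage hK3 hM28 htr3m htr3nn htr3b hEub3
  have hfin4 : (∫ x in {x : ℝ | x ∈ Ic ∧ K < trace4 K fb F x}, trace4 K fb F x)
      ≤ (10*(M+28) + 4200) / Real.log K :=
    final_stage hK3 hM28 htr4m htr4nn htr4b hEub4
  have harith : (40*(M+28) + 16800) / Real.log K
      = 4 * ((10*(M+28) + 4200) / Real.log K) := by ring
  linarith [hfin1, hfin2, hfin3, hfin4]
end
end

section
/- Let G, H ∈ L¹([0,1]²) be nonnegative with G(x,y) + H(x,y) independent of x (i.e. ∂_x G = −∂_x H), let f_{b1}, f_{b2} be nonnegative integrable functions on [0,1], and let g_1, g_2, h_1, h_2 be nonnegative functions in L^∞([0,1]²) satisfying, for a.e. (x,y) ∈ [0,1]²: g_1(x,y) = f_{b1}(y) + G(x,y) − ∫₀ˣ (g_1 h_2)(X,y) dX; h_1(x,y) = f_{b1}(y) + G(x,y) − ∫₀ˣ (h_1 g_2)(X,y) dX; g_2(x,y) = f_{b2}(y) + H(x,y) − ∫ₓ¹ (h_1 g_2)(X,y) dX; h_2(x,y) = f_{b2}(y) + H(x,y)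 − ∫ₓ¹ (g_1 h_2)(X,y) dX; together with the ordering g_1 ≤ h_1 and g_2 ≤ h_2. Then g_1 = h_1 and g_2 = h_2 almost everywhere. -/
open MeasureTheory Real Set Filter
open scoped Classical Topology ENNReal

noncomputable section

section AuxUniq
open intervalIntegral

def nuI : Measure ℝ := volume.restrict (Icc (0:ℝ) 1)

instance : IsFiniteMeasure nuI := by
  constructor
  rw [nuI, Measure.restrict_apply MeasurableSet.univ]
  simp [Real.volume_Icc]

instance : SigmaFinite nuI := by unfold nuI; infer_instance

lemma restrict_unitSq : (volume : Measure (ℝ × ℝ)).restrict UnitSq = nuI.prod nuI := by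
  rw [nuI, Measure.prod_restrict, ← MeasureTheory.Measure.volume_eq_prod, UnitSq]

lemma aux_ae_slice {P : ℝ × ℝ → Prop}
    (h : ∀ᵐ p : ℝ × ℝ ∂(volume.restrict UnitSq), P p) :
    ∀ᵐ y ∂nuI, ∀ᵐ x ∂nuI, P (x, y) := by
  rw [restrict_unitSq] at h
  rw [Filter.eventually_iff, mem_ae_iff] at h
  have hswap : (nuI.prod nuI) (Prod.swap ⁻¹' {p : ℝ × ℝ | P p}ᶜ) = 0 :=
    ((Measure.measurePreserving_swap (μ := nuI) (ν := nuI))).quasiMeasurePreserving.preimage_null h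
  have := Measure.measure_ae_null_of_prod_null hswap
  filter_upwards [this] with y hy
  rw [Pi.zero_apply] at hy
  have : ∀ᵐ x ∂nuI, x ∉ (Prod.mk y ⁻¹' (Prod.swap ⁻¹' {p : ℝ × ℝ | P p}ᶜ)) :=
    ae_iff.mpr (by simpa [Set.compl_setOf] using hy)
  filter_upwards [this] with x hx
  simpa using hx

lemma aux_ae_unslice {P : ℝ × ℝ → Prop}
    (hP : MeasurableSet {p : ℝ × ℝ | P p})
    (h : ∀ᵐ y ∂nuI, ∀ᵐ x ∂nuI, P (x, y)) :
    ∀ᵐ p : ℝ × ℝ ∂(volume.restrict UnitSq), P p := by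
  rw [restrict_unitSq]
  rw [Filter.eventually_iff, mem_ae_iff]
  have hmeas : MeasurableSet (Prod.swap ⁻¹' {p : ℝ × ℝ | P p}ᶜ) :=
    hP.compl.preimage measurable_swap
  have hkey : (nuI.prod nuI) (Prod.swap ⁻¹' {p : ℝ × ℝ | P p}ᶜ) = 0 := by
    rw [Measure.measure_prod_null hmeas]
    filter_upwards [h] with y hy
    rw [Pi.zero_apply]
    have : ∀ᵐ x ∂nuI, x ∉ Prod.mk y ⁻¹' (Prod.swap ⁻¹' {p : ℝ × ℝ | P p}ᶜ) := by
      filter_upwards [hy] with x hx; simpa using hx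
    exact ae_iff.mp (by simpa using this)
  have := ((Measure.measurePreserving_swap (μ := nuI) (ν := nuI))).measure_preimage
      (hP.compl.nullMeasurableSet)
  rw [← this]; exact hkey

lemma aux_cont_nonneg {f : ℝ → ℝ} (hf : Continuous f)
    (h : ∀ᵐ x ∂nuI, 0 ≤ f x) : ∀ x ∈ Icc (0:ℝ) 1, 0 ≤ f x := by
  intro x0 hx0
  by_contra hneg
  push_neg at hneg
  obtain ⟨ε, hε, hball⟩ := Metric.isOpen_iff.1 (isOpen_Iio.preimage hf) x0 hneg
  set m := max 0 (x0 - ε/2) with hm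
  set m' := min 1 (x0 + ε/2) with hm'
  have hmm : m < m' := by
    apply max_lt <;> apply lt_min
    · norm_num
    · linarith [hx0.1]
    · linarith [hx0.2]
    · linarith
  have hsub : Ioo m m' ⊆ {x | f x < 0} := by
    intro x hx
    have : x ∈ Metric.ball x0 ε := by
      rw [Metric.mem_ball, Real.dist_eq, abs_lt]
      constructor
      · have := hx.1; have : x0 - ε/2 < x := lt_of_le_of_lt (le_max_right _ _) hx.1; linarith
      · have : x < x0 + ε/2 := lt_of_lt_of_le hx.2 (min_le_right _ _); linarith
    exact hball this
  have hpos : 0 < nuI (Ioo m m') := by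
    rw [nuI, Measure.restrict_apply measurableSet_Ioo]
    have : Ioo m m' ∩ Icc 0 1 = Ioo m m' := by
      apply inter_eq_self_of_subset_left
      intro x hx
      exact ⟨le_trans (le_max_left _ _) hx.1.le, le_trans hx.2.le (min_le_left _ _)⟩
    rw [this, Real.volume_Ioo]
    simp [ENNReal.ofReal_pos, hmm]
  have hnull : nuI {x | ¬ 0 ≤ f x} = 0 := ae_iff.mp h
  have : nuI (Ioo m m') ≤ nuI {x | ¬ 0 ≤ f x} := by
    apply measure_mono
    intro x hx
    simp only [mem_setOf_eq, not_le]
    exact hsub hx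
  rw [hnull] at this
  exact absurd (le_antisymm this zero_le) (ne_of_gt hpos)

lemma slice_uniq (a b c d β γ : ℝ → ℝ)
    (ha : Measurable a) (hb : Measurable b) (hc : Measurable c) (hd : Measurable d)
    (M : ℝ)
    (hM : ∀ᵐ x ∂nuI, (0 ≤ a x ∧ a x ≤ M) ∧ (0 ≤ b x ∧ b x ≤ M) ∧
      (0 ≤ c x ∧ c x ≤ M) ∧ (0 ≤ d x ∧ d x ≤ M))
    (he1 : ∀ᵐ x ∂nuI, a x = β x - ∫ X in (0:ℝ)..x, a X * d X)
    (he2 : ∀ᵐ x ∂nuI, c x = β x - ∫ X in (0:ℝ)..x, c X * b X)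
    (he3 : ∀ᵐ x ∂nuI, b x = γ x - ∫ X in x..(1:ℝ), c X * b X)
    (he4 : ∀ᵐ x ∂nuI, d x = γ x - ∫ X in x..(1:ℝ), a X * d X)
    (ho1 : ∀ᵐ x ∂nuI, a x ≤ c x) (ho2 : ∀ᵐ x ∂nuI, b x ≤ d x) :
    (∀ᵐ x ∂nuI, a x = c x) ∧ (∀ᵐ x ∂nuI, b x = d x) := by
  have Int_ad : Integrable (fun X => a X * d X) nuI := by
    refine Integrable.mono' (integrable_const (M*M)) ((ha.mul hd).aestronglyMeasurable) ?_
    filter_upwards [hM] with x hx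
    have := hx.1; have := hx.2.2.2
    rw [Real.norm_eq_abs, abs_mul, abs_of_nonneg hx.1.1, abs_of_nonneg hx.2.2.2.1]
    exact mul_le_mul hx.1.2 hx.2.2.2.2 hx.2.2.2.1 (le_trans hx.1.1 hx.1.2)
  have Int_cb : Integrable (fun X => c X * b X) nuI := by
    refine Integrable.mono' (integrable_const (M*M)) ((hc.mul hb).aestronglyMeasurable) ?_
    filter_upwards [hM] with x hx
    rw [Real.norm_eq_abs, abs_mul, abs_of_nonneg hx.2.2.1.1, abs_of_nonneg hx.2.1.1]
    exact mul_le_mul hx.2.2.1.2 hx.2.1.2 hx.2.1.1 (le_trans hx.1.1 hx.1.2)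
  set D : ℝ → ℝ := (Icc (0:ℝ) 1).indicator (fun X => a X * d X - c X * b X) with hD
  have hDvol : Integrable D volume := by
    rw [hD, integrable_indicator_iff measurableSet_Icc]
    exact Int_ad.sub Int_cb
  have hD_ii : ∀ s t : ℝ, IntervalIntegrable D volume s t := fun s t =>
    hDvol.intervalIntegrable
  set I : ℝ → ℝ := fun x => ∫ X in (0:ℝ)..x, D X with hIdef
  have hIcont : Continuous I := hDvol.continuous_primitive 0
  have hii_ad : ∀ x ∈ Icc (0:ℝ) 1, IntervalIntegrable (fun X => a X * d X) volume 0 x := by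
    intro x hx
    rw [intervalIntegrable_iff_integrableOn_Ioc_of_le hx.1]
    exact (show IntegrableOn (fun X => a X * d X) (Icc (0:ℝ) 1) volume from Int_ad).mono_set
      (fun z hz => ⟨hz.1.le, hz.2.trans hx.2⟩)
  have hii_cb : ∀ x ∈ Icc (0:ℝ) 1, IntervalIntegrable (fun X => c X * b X) volume 0 x := by
    intro x hx
    rw [intervalIntegrable_iff_integrableOn_Ioc_of_le hx.1]
    exact (show IntegrableOn (fun X => c X * b X) (Icc (0:ℝ) 1) volume from Int_cb).mono_set
      (fun z hz => ⟨hz.1.le, hz.2.trans hx.2⟩)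
  have hii_ad' : ∀ x ∈ Icc (0:ℝ) 1, IntervalIntegrable (fun X => a X * d X) volume x 1 := by
    intro x hx
    rw [intervalIntegrable_iff_integrableOn_Ioc_of_le hx.2]
    exact (show IntegrableOn (fun X => a X * d X) (Icc (0:ℝ) 1) volume from Int_ad).mono_set
      (fun z hz => ⟨hx.1.trans hz.1.le, hz.2⟩)
  have hii_cb' : ∀ x ∈ Icc (0:ℝ) 1, IntervalIntegrable (fun X => c X * b X) volume x 1 := by
    intro x hx
    rw [intervalIntegrable_iff_integrableOn_Ioc_of_le hx.2]
    exact (show IntegrableOn (fun X => c X * b X) (Icc (0:ℝ) 1) volume from Int_cb).mono_set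
      (fun z hz => ⟨hx.1.trans hz.1.le, hz.2⟩)
  have E1 : ∀ᵐ x ∂nuI, c x - a x = I x := by
    filter_upwards [he1, he2, ae_restrict_mem measurableSet_Icc] with x hx1 hx2 hxm
    have h5 : (∫ X in (0:ℝ)..x, a X * d X) - ∫ X in (0:ℝ)..x, c X * b X
        = ∫ X in (0:ℝ)..x, (a X * d X - c X * b X) :=
      (intervalIntegral.integral_sub (hii_ad x hxm) (hii_cb x hxm)).symm
    have h6 : (∫ X in (0:ℝ)..x, (a X * d X - c X * b X)) = I x := by
      apply intervalIntegral.integral_congr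
      intro X hX
      rw [uIcc_of_le hxm.1] at hX
      show a X * d X - c X * b X = D X
      rw [hD, Set.indicator_of_mem (show X ∈ Icc (0:ℝ) 1 from ⟨hX.1, hX.2.trans hxm.2⟩)]
    rw [hx1, hx2, ← h6, ← h5]; ring
  have E2 : ∀ᵐ x ∂nuI, d x - b x = I x - I 1 := by
    filter_upwards [he3, he4, ae_restrict_mem measurableSet_Icc] with x hx3 hx4 hxm
    have h5 : (∫ X in x..(1:ℝ), c X * b X) - ∫ X in x..(1:ℝ), a X * d X
        = ∫ X in x..(1:ℝ), (c X * b X - a X * d X) :=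
      (intervalIntegral.integral_sub (hii_cb' x hxm) (hii_ad' x hxm)).symm
    have h6 : (∫ X in x..(1:ℝ), (c X * b X - a X * d X)) = -∫ X in x..(1:ℝ), D X := by
      rw [← intervalIntegral.integral_neg]
      apply intervalIntegral.integral_congr
      intro X hX
      rw [uIcc_of_le hxm.2] at hX
      show c X * b X - a X * d X = -D X
      rw [hD, Set.indicator_of_mem (show X ∈ Icc (0:ℝ) 1 from ⟨hxm.1.trans hX.1, hX.2⟩)]; ring
    have h7 : I x + ∫ X in x..(1:ℝ), D X = I 1 :=
      intervalIntegral.integral_add_adjacent_intervals (hD_ii 0 x) (hD_ii x 1)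
    rw [hx3, hx4]
    have : γ x - (∫ X in x..(1:ℝ), a X * d X) - (γ x - ∫ X in x..(1:ℝ), c X * b X)
        = (∫ X in x..(1:ℝ), c X * b X) - ∫ X in x..(1:ℝ), a X * d X := by ring
    rw [this, h5, h6]
    linarith
  have hI_nonneg : ∀ x ∈ Icc (0:ℝ) 1, 0 ≤ I x := by
    apply aux_cont_nonneg hIcont
    filter_upwards [E1, ho1] with x h1 h2
    linarith
  have hIC : ∀ x ∈ Icc (0:ℝ) 1, 0 ≤ I x - I 1 := by
    apply aux_cont_nonneg (hIcont.sub continuous_const)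
    filter_upwards [E2, ho2] with x h1 h2
    show 0 ≤ I x - I 1
    linarith
  have hI0 : I 0 = 0 := intervalIntegral.integral_same
  have hC0 : I 1 = 0 := by
    have h8 := hIC 0 ⟨le_refl 0, zero_le_one⟩
    have h9 := hI_nonneg 1 ⟨zero_le_one, le_refl 1⟩
    linarith [hI0]
  have E2' : ∀ᵐ x ∂nuI, d x - b x = I x := by
    filter_upwards [E2] with x hx; rw [hx, hC0]; ring
  -- Gronwall
  have hDle : ∀ᵐ x ∂nuI, D x ≤ M * I x := by
    filter_upwards [hM, E1, E2', ae_restrict_mem measurableSet_Icc] with x hbd h1 h2 hxm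
    rw [hD, Set.indicator_of_mem hxm]
    have hc' : c x = a x + I x := by linarith
    have hd' : d x = b x + I x := by linarith
    have heq : a x * d x - c x * b x = (a x - b x) * I x := by rw [hc', hd']; ring
    rw [heq]
    exact mul_le_mul_of_nonneg_right (by linarith [hbd.1.2, hbd.2.1.1]) (hI_nonneg x hxm)
  set φ : ℝ → ℝ := fun x => ∫ X in (0:ℝ)..x, I X with hφdef
  have hφderiv : ∀ x : ℝ, HasDerivAt φ (I x) x := by
    intro x
    exact intervalIntegral.integral_hasDerivAt_right (hIcont.intervalIntegrable 0 x)
      hIcont.aestronglyMeasurable.stronglyMeasurableAtFilter hIcont.continuousAt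
  have hφle : ∀ x ∈ Icc (0:ℝ) 1, I x ≤ M * φ x := by
    intro x hx
    have h10 : (∫ X in (0:ℝ)..x, D X) ≤ ∫ X in (0:ℝ)..x, M * I X := by
      apply intervalIntegral.integral_mono_ae_restrict hx.1 (hD_ii 0 x)
        ((continuous_const.mul hIcont).intervalIntegrable 0 x)
      exact ae_restrict_of_ae_restrict_of_subset (Icc_subset_Icc le_rfl hx.2) hDle
    rw [intervalIntegral.integral_const_mul] at h10
    exact h10
  set ψ : ℝ → ℝ := fun x => φ x * Real.exp (-(M * x)) with hψdef
  have hψderiv : ∀ x : ℝ, HasDerivAt ψ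
      (I x * Real.exp (-(M * x)) + φ x * (Real.exp (-(M * x)) * -(M * 1))) x := by
    intro x
    exact (hφderiv x).mul (((hasDerivAt_id x).const_mul M).neg.exp)
  have hanti : AntitoneOn ψ (Icc (0:ℝ) 1) := by
    apply antitoneOn_of_deriv_nonpos (convex_Icc 0 1)
    · exact (Continuous.mul (by fun_prop) (by fun_prop)).continuousOn
    · intro x hx
      exact ((hψderiv x).differentiableAt).differentiableWithinAt
    · intro x hx
      rw [interior_Icc] at hx
      rw [(hψderiv x).deriv]
      have h8 := hφle x ⟨hx.1.le, hx.2.le⟩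
      have hexp := Real.exp_pos (-(M * x))
      have : I x * Real.exp (-(M * x)) + φ x * (Real.exp (-(M * x)) * -(M * 1))
          = Real.exp (-(M * x)) * (I x - M * φ x) := by ring
      rw [this]
      exact mul_nonpos_of_nonneg_of_nonpos hexp.le (by linarith)
  have hφnonneg : ∀ x ∈ Icc (0:ℝ) 1, 0 ≤ φ x := by
    intro x hx
    exact intervalIntegral.integral_nonneg hx.1 (fun u hu => hI_nonneg u ⟨hu.1, hu.2.trans hx.2⟩)
  have hφzero : ∀ x ∈ Icc (0:ℝ) 1, φ x = 0 := by
    intro x hx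
    have h11 : ψ x ≤ ψ 0 := hanti ⟨le_refl 0, zero_le_one⟩ hx hx.1
    have h12 : ψ 0 = 0 := by
      simp only [hψdef, hφdef, intervalIntegral.integral_same, zero_mul]
    have hexp := Real.exp_pos (-(M * x))
    have h13 : φ x * Real.exp (-(M * x)) ≤ 0 := by rw [← h12]; exact h11
    have h14 : φ x ≤ 0 := by
      by_contra hcon
      push_neg at hcon
      nlinarith
    linarith [hφnonneg x hx]
  have hIzero : ∀ x ∈ Icc (0:ℝ) 1, I x = 0 := by
    intro x hx
    have := hφle x hx
    rw [hφzero x hx] at this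
    have := hI_nonneg x hx
    linarith
  constructor
  · filter_upwards [E1, ae_restrict_mem measurableSet_Icc] with x h1 h2
    have := hIzero x h2; linarith
  · filter_upwards [E2', ae_restrict_mem measurableSet_Icc] with x h1 h2
    have := hIzero x h2; linarith

end AuxUniq

/-- uniqueness (Gronwall) step for the alternating approximation
scheme: the monotone limits `g₁ ≤ h₁`, `g₂ ≤ h₂` of the scheme coincide. -/
theorem alternating_scheme_uniqueness
    (G H : ℝ → ℝ → ℝ)
    (hGmeas : Measurable (Function.uncurry G)) (hHmeas : Measurable (Function.uncurry H))
    (hGpos : ∀ᵐ p : ℝ × ℝ ∂(volume.restrict UnitSq), 0 ≤ G p.1 p.2)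
    (hHpos : ∀ᵐ p : ℝ × ℝ ∂(volume.restrict UnitSq), 0 ≤ H p.1 p.2)
    (hGint : IntegrableOn (fun p : ℝ × ℝ => G p.1 p.2) UnitSq)
    (hHint : IntegrableOn (fun p : ℝ × ℝ => H p.1 p.2) UnitSq)
    (hGH : ∀ x x' y : ℝ, G x y + H x y = G x' y + H x' y)
    (fb1 fb2 : ℝ → ℝ) (hfb1meas : Measurable fb1) (hfb2meas : Measurable fb2)
    (hfb1pos : ∀ y ∈ Icc (0:ℝ) 1, 0 ≤ fb1 y) (hfb2pos : ∀ y ∈ Icc (0:ℝ) 1, 0 ≤ fb2 y)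
    (hfb1int : IntegrableOn fb1 (Icc (0:ℝ) 1)) (hfb2int : IntegrableOn fb2 (Icc (0:ℝ) 1))
    (g1 g2 h1 h2 : ℝ → ℝ → ℝ)
    (hg1meas : Measurable (Function.uncurry g1)) (hg2meas : Measurable (Function.uncurry g2))
    (hh1meas : Measurable (Function.uncurry h1)) (hh2meas : Measurable (Function.uncurry h2))
    (hpos : ∀ᵐ p : ℝ × ℝ ∂(volume.restrict UnitSq),
      0 ≤ g1 p.1 p.2 ∧ 0 ≤ g2 p.1 p.2 ∧ 0 ≤ h1 p.1 p.2 ∧ 0 ≤ h2 p.1 p.2)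
    (hbdd : ∃ M : ℝ, ∀ᵐ p : ℝ × ℝ ∂(volume.restrict UnitSq),
      g1 p.1 p.2 ≤ M ∧ g2 p.1 p.2 ≤ M ∧ h1 p.1 p.2 ≤ M ∧ h2 p.1 p.2 ≤ M)
    (heq1 : ∀ᵐ p : ℝ × ℝ ∂(volume.restrict UnitSq),
      g1 p.1 p.2 = fb1 p.2 + G p.1 p.2 - ∫ X in (0:ℝ)..p.1, g1 X p.2 * h2 X p.2)
    (heq2 : ∀ᵐ p : ℝ × ℝ ∂(volume.restrict UnitSq),
      h1 p.1 p.2 = fb1 p.2 + G p.1 p.2 - ∫ X in (0:ℝ)..p.1, h1 X p.2 * g2 X p.2)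
    (heq3 : ∀ᵐ p : ℝ × ℝ ∂(volume.restrict UnitSq),
      g2 p.1 p.2 = fb2 p.2 + H p.1 p.2 - ∫ X in p.1..(1:ℝ), h1 X p.2 * g2 X p.2)
    (heq4 : ∀ᵐ p : ℝ × ℝ ∂(volume.restrict UnitSq),
      h2 p.1 p.2 = fb2 p.2 + H p.1 p.2 - ∫ X in p.1..(1:ℝ), g1 X p.2 * h2 X p.2)
    (hord1 : ∀ᵐ p : ℝ × ℝ ∂(volume.restrict UnitSq), g1 p.1 p.2 ≤ h1 p.1 p.2)
    (hord2 : ∀ᵐ p : ℝ × ℝ ∂(volume.restrict UnitSq), g2 p.1 p.2 ≤ h2 p.1 p.2) :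
    ((fun p : ℝ × ℝ => g1 p.1 p.2) =ᵐ[volume.restrict UnitSq] fun p => h1 p.1 p.2) ∧
    ((fun p : ℝ × ℝ => g2 p.1 p.2) =ᵐ[volume.restrict UnitSq] fun p => h2 p.1 p.2) := by
  obtain ⟨M, hbddM⟩ := hbdd
  have hbig := hpos.and (hbddM.and (hord1.and (hord2.and (heq1.and (heq2.and (heq3.and heq4))))))
  have hsl := aux_ae_slice (P := fun p : ℝ × ℝ =>
    (0 ≤ g1 p.1 p.2 ∧ 0 ≤ g2 p.1 p.2 ∧ 0 ≤ h1 p.1 p.2 ∧ 0 ≤ h2 p.1 p.2) ∧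
    (g1 p.1 p.2 ≤ M ∧ g2 p.1 p.2 ≤ M ∧ h1 p.1 p.2 ≤ M ∧ h2 p.1 p.2 ≤ M) ∧
    (g1 p.1 p.2 ≤ h1 p.1 p.2) ∧ (g2 p.1 p.2 ≤ h2 p.1 p.2) ∧
    (g1 p.1 p.2 = fb1 p.2 + G p.1 p.2 - ∫ X in (0:ℝ)..p.1, g1 X p.2 * h2 X p.2) ∧
    (h1 p.1 p.2 = fb1 p.2 + G p.1 p.2 - ∫ X in (0:ℝ)..p.1, h1 X p.2 * g2 X p.2) ∧
    (g2 p.1 p.2 = fb2 p.2 + H p.1 p.2 - ∫ X in p.1..(1:ℝ), h1 X p.2 * g2 X p.2) ∧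
    (h2 p.1 p.2 = fb2 p.2 + H p.1 p.2 - ∫ X in p.1..(1:ℝ), g1 X p.2 * h2 X p.2)) hbig
  have main : ∀ᵐ y ∂nuI, (∀ᵐ x ∂nuI, g1 x y = h1 x y) ∧ (∀ᵐ x ∂nuI, g2 x y = h2 x y) := by
    filter_upwards [hsl] with y hy
    have hma : Measurable fun x => g1 x y :=
      hg1meas.comp (measurable_id.prodMk measurable_const)
    have hmb : Measurable fun x => g2 x y :=
      hg2meas.comp (measurable_id.prodMk measurable_const)
    have hmc : Measurable fun x => h1 x y :=
      hh1meas.comp (measurable_id.prodMk measurable_const)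
    have hmd : Measurable fun x => h2 x y :=
      hh2meas.comp (measurable_id.prodMk measurable_const)
    refine slice_uniq (fun x => g1 x y) (fun x => g2 x y) (fun x => h1 x y) (fun x => h2 x y)
      (fun x => fb1 y + G x y) (fun x => fb2 y + H x y) hma hmb hmc hmd M
      ?_ ?_ ?_ ?_ ?_ ?_ ?_
    · filter_upwards [hy] with x hx
      exact ⟨⟨hx.1.1, hx.2.1.1⟩, ⟨hx.1.2.1, hx.2.1.2.1⟩,
        ⟨hx.1.2.2.1, hx.2.1.2.2.1⟩, ⟨hx.1.2.2.2, hx.2.1.2.2.2⟩⟩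
    · filter_upwards [hy] with x hx; exact hx.2.2.2.2.1
    · filter_upwards [hy] with x hx; exact hx.2.2.2.2.2.1
    · filter_upwards [hy] with x hx; exact hx.2.2.2.2.2.2.1
    · filter_upwards [hy] with x hx; exact hx.2.2.2.2.2.2.2
    · filter_upwards [hy] with x hx; exact hx.2.2.1
    · filter_upwards [hy] with x hx; exact hx.2.2.2.1
  constructor
  · exact aux_ae_unslice (measurableSet_eq_fun hg1meas hh1meas) (main.mono fun y hy => hy.1)
  · exact aux_ae_unslice (measurableSet_eq_fun hg2meas hh2meas) (main.mono fun y hy => hy.2)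
end
end
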